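/- arXiv:2110.13861 — 9 statements merged into one kernel-verified Lean document; each statement's English description precedes it below -/
import Mathlib

section
/- Let X be a graph that admits a collection C of maximal cliques such that every edge lies in exactly one clique of C and every vertex lies in at most m cliques of C. Then the smallest eigenvalue of the adjacency matrix of X is at least −m. -/
open Finset Matrix

/-- If a graph `X` admits a collection of maximal cliques such that every
edge lies in exactly one of them and every vertex lies in at most `m` of them, then every
eigenvalue of the adjacency matrix of `X` is at least `-m`. -/
theorem smallest_eigenvalue_ge_of_clique_geometry {V : Type*} [Fintype V] [DecidableEq V]
    (X : SimpleGraph V) [DecidableRel X.Adj]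
    (𝒞 : Finset (Finset V)) (m : ℕ)
    (hclique : ∀ C ∈ 𝒞, X.IsClique (C : Set V))
    (hmax : ∀ C ∈ 𝒞, ∀ w : V, w ∉ C → ¬ X.IsClique (insert w (C : Set V)))
    (hedge : ∀ u v : V, X.Adj u v → ∃! C, C ∈ 𝒞 ∧ u ∈ C ∧ v ∈ C)
    (hvert : ∀ v : V, (𝒞.filter fun C => v ∈ C).card ≤ m)
    (μ : ℝ) (f : V → ℝ) (hf : f ≠ 0)
    (heig : X.adjMatrix ℝ *ᵥ f = μ • f) :
    -(m : ℝ) ≤ μ := by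
  classical
  set S : ℝ := ∑ v, f v ^ 2 with hS
  have hSpos : 0 < S := by
    obtain ⟨v, hv⟩ : ∃ v, f v ≠ 0 := by
      by_contra h; push_neg at h; exact hf (funext h)
    have h1 : 0 < f v ^ 2 := by positivity
    exact lt_of_lt_of_le h1 (Finset.single_le_sum (fun i _ => sq_nonneg (f i)) (mem_univ v))
  have hcount : ∀ u v : V, ((𝒞.filter fun C => u ∈ C ∧ v ∈ C).card : ℝ)
      = X.adjMatrix ℝ u v + (if u = v then ((𝒞.filter fun C => u ∈ C).card : ℝ) else 0) := by
    intro u v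
    by_cases huv : u = v
    · subst huv
      simp
    · simp only [if_neg huv, add_zero]
      by_cases hadj : X.Adj u v
      · obtain ⟨C, hC, hCuniq⟩ := hedge u v hadj
        have he : (𝒞.filter fun C => u ∈ C ∧ v ∈ C) = {C} := by
          ext D
          simp only [mem_filter, mem_singleton]
          constructor
          · rintro ⟨hD, hu, hv⟩; exact hCuniq D ⟨hD, hu, hv⟩
          · rintro rfl; exact ⟨hC.1, hC.2.1, hC.2.2⟩
        rw [he]; simp [hadj]
      · have he : (𝒞.filter fun C => u ∈ C ∧ v ∈ C) = ∅ := by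
          ext D
          simp only [mem_filter, Finset.notMem_empty, iff_false, not_and]
          intro hD hu hv
          exact hadj (hclique D hD hu hv huv)
        rw [he]; simp [hadj]
  have hexp : ∑ C ∈ 𝒞, (∑ v ∈ C, f v) ^ 2
      = (∑ u, ∑ v, X.adjMatrix ℝ u v * (f u * f v))
        + ∑ u, ((𝒞.filter fun C => u ∈ C).card : ℝ) * f u ^ 2 := by
    calc ∑ C ∈ 𝒞, (∑ v ∈ C, f v) ^ 2
        = ∑ C ∈ 𝒞, ∑ u, ∑ v, (if u ∈ C ∧ v ∈ C then f u * f v else 0) := by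
          refine Finset.sum_congr rfl fun C _ => ?_
          rw [sq, Finset.sum_mul_sum]
          simp [ite_and, Finset.mul_sum, Finset.sum_ite_mem]
      _ = ∑ u, ∑ v, ∑ C ∈ 𝒞, (if u ∈ C ∧ v ∈ C then f u * f v else 0) := by
          rw [Finset.sum_comm]
          exact Finset.sum_congr rfl fun u _ => Finset.sum_comm
      _ = ∑ u, ∑ v, ((𝒞.filter fun C => u ∈ C ∧ v ∈ C).card : ℝ) * (f u * f v) := by
          refine Finset.sum_congr rfl fun u _ => Finset.sum_congr rfl fun v _ => ?_
          rw [← Finset.sum_filter, Finset.sum_const, nsmul_eq_mul]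
      _ = (∑ u, ∑ v, X.adjMatrix ℝ u v * (f u * f v))
            + ∑ u, ((𝒞.filter fun C => u ∈ C).card : ℝ) * f u ^ 2 := by
          rw [← Finset.sum_add_distrib]
          refine Finset.sum_congr rfl fun u _ => ?_
          simp only [hcount, add_mul, Finset.sum_add_distrib]
          congr 1
          simp only [ite_mul, zero_mul, Finset.sum_ite_eq, mem_univ, if_true]
          ring
  have hAf : ∑ u, ∑ v, X.adjMatrix ℝ u v * (f u * f v) = μ * S := by
    have : ∀ u, ∑ v, X.adjMatrix ℝ u v * (f u * f v) = f u * (X.adjMatrix ℝ *ᵥ f) u := by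
      intro u
      rw [mulVec, dotProduct, Finset.mul_sum]
      exact Finset.sum_congr rfl fun v _ => by ring
    simp only [this, heig, Pi.smul_apply, smul_eq_mul]
    rw [hS, Finset.mul_sum]
    exact Finset.sum_congr rfl fun v _ => by ring
  have hbound : -(m : ℝ) * S ≤ μ * S := by
    rw [← hAf]
    have h1 : ∑ u, ∑ v, X.adjMatrix ℝ u v * (f u * f v)
        = ∑ C ∈ 𝒞, (∑ v ∈ C, f v) ^ 2 - ∑ u, ((𝒞.filter fun C => u ∈ C).card : ℝ) * f u ^ 2 := by
      rw [hexp]; ring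
    rw [h1]
    have h2 : ∑ u, ((𝒞.filter fun C => u ∈ C).card : ℝ) * f u ^ 2 ≤ (m : ℝ) * S := by
      rw [hS, Finset.mul_sum]
      refine Finset.sum_le_sum fun u _ => ?_
      exact mul_le_mul_of_nonneg_right (by exact_mod_cast hvert u) (sq_nonneg _)
    have h3 : (0:ℝ) ≤ ∑ C ∈ 𝒞, (∑ v ∈ C, f v) ^ 2 :=
      Finset.sum_nonneg fun C _ => sq_nonneg _
    nlinarith
  exact le_of_mul_le_mul_right hbound hSpos
end

section
/- Let X be a non-complete connected regular graph admitting a collection C of maximal cliques such that every edge lies in exactly one clique of C and every vertex lies in exactly at most 2 cliques of C. Then X is isomorphic to the line graph L(Y) of some graph Y. -/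
/-!
In a connected `k`-regular graph, a `(k + 1)`-clique is closed under adjacency and hence is the
whole graph. If a vertex `v` lay in only one clique `C` of the edge partition `𝒞`, then every
edge at `v` would lie in `C`, so `C` would be `v` together with its `k` neighbours; thus in a
non-complete graph every vertex lies in exactly two cliques of `𝒞`. Two cliques of `𝒞` meet in
at most one vertex, because an edge in both would lie in two cliques. Hence sending `v` to the
pair of cliques through it is a bijection onto the edges of the intersection graph of `𝒞`, and
two vertices are adjacent exactly when their pairs share a clique.
-/

open Finset

namespace SimpleGraph

variable {V : Type*} {X : SimpleGraph V}

theorem Reachable.mem_of_adj_closed {s : Set V} (hs : ∀ ⦃a b⦄, X.Adj a b → a ∈ s → b ∈ s)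
    {u v : V} (h : X.Reachable u v) (hu : u ∈ s) : v ∈ s := by
  obtain ⟨p⟩ := h
  induction p with
  | nil => exact hu
  | cons hadj _ ih => exact ih (hs hadj hu)

theorem Connected.exists_adj_of_ne_top (hconn : X.Connected) (htop : X ≠ ⊤) (v : V) :
    ∃ w, X.Adj v w := by
  have : Nontrivial V := SimpleGraph.nontrivial_iff.1 (nontrivial_of_ne X ⊤ htop)
  exact X.mem_support.1 (hconn.preconnected.support_eq_univ ▸ Set.mem_univ v)

section Regular

variable [LocallyFinite X] {k : ℕ}

theorem IsRegularOfDegree.neighborFinset_eq_erase [DecidableEq V]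
    (hreg : X.IsRegularOfDegree k) {C : Finset V} (hC : X.IsNClique (k + 1) C) {a : V}
    (ha : a ∈ C) : X.neighborFinset a = C.erase a := by
  refine (eq_of_subset_of_card_le (fun x hx => ?_) ?_).symm
  · exact (mem_neighborFinset _ _ _).2
      (hC.isClique ha (mem_of_mem_erase hx) (ne_of_mem_erase hx).symm)
  · rw [card_erase_of_mem ha, hC.card_eq, card_neighborFinset_eq_degree, hreg a]
    omega

theorem IsRegularOfDegree.eq_top_of_isNClique (hconn : X.Connected)
    (hreg : X.IsRegularOfDegree k) {C : Finset V} (hC : X.IsNClique (k + 1) C) : X = ⊤ := by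
  classical
  obtain ⟨a, ha⟩ : C.Nonempty := by rw [← card_pos, hC.card_eq]; omega
  have hclosed : ∀ ⦃x y⦄, X.Adj x y → x ∈ (C : Set V) → y ∈ (C : Set V) := fun x y hxy hx =>
    mem_of_mem_erase (hreg.neighborFinset_eq_erase hC hx ▸ (mem_neighborFinset _ _ _).2 hxy)
  have hC_univ : (C : Set V) = Set.univ :=
    Set.eq_univ_of_forall fun v => (hconn a v).mem_of_adj_closed hclosed ha
  rw [← isClique_univ, ← hC_univ]
  exact hC.isClique

end Regular

structure IsEdgeCliquePartition (X : SimpleGraph V) (𝒞 : Finset (Finset V)) : Prop where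
  isClique : ∀ C ∈ 𝒞, X.IsClique (C : Set V)
  existsUnique_mem : ∀ ⦃u v⦄, X.Adj u v → ∃! C, C ∈ 𝒞 ∧ u ∈ C ∧ v ∈ C

def intersectionGraph (𝒞 : Finset (Finset V)) : SimpleGraph 𝒞 where
  Adj C D := C ≠ D ∧ ¬ Disjoint (C : Finset V) D
  symm := ⟨fun _ _ h => ⟨h.1.symm, fun hd => h.2 hd.symm⟩⟩
  loopless := ⟨fun _ h => h.1 rfl⟩

@[simp]
theorem intersectionGraph_adj {𝒞 : Finset (Finset V)} {C D : 𝒞} :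
    (intersectionGraph 𝒞).Adj C D ↔ C ≠ D ∧ ¬ Disjoint (C : Finset V) D :=
  Iff.rfl

theorem _root_.Finset.exists_pair_of_card_filter_mem_eq_two [DecidableEq V]
    {𝒞 : Finset (Finset V)} {v : V} (h : #{C ∈ 𝒞 | v ∈ C} = 2) :
    ∃ A B : 𝒞, A ≠ B ∧ ∀ C : 𝒞, v ∈ (C : Finset V) ↔ C = A ∨ C = B := by
  obtain ⟨A, B, hAB, hfilter⟩ := card_eq_two.1 h
  have hmem : ∀ C, C ∈ 𝒞 ∧ v ∈ C ↔ C = A ∨ C = B := fun C => by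
    simpa only [mem_filter, mem_insert, mem_singleton] using Finset.ext_iff.1 hfilter C
  have hA := (hmem A).2 (Or.inl rfl)
  have hB := (hmem B).2 (Or.inr rfl)
  refine ⟨⟨A, hA.1⟩, ⟨B, hB.1⟩, fun h => hAB (congrArg Subtype.val h), fun C => ?_⟩
  simp only [Subtype.ext_iff, ← hmem, C.2, true_and]

namespace IsEdgeCliquePartition

variable {𝒞 : Finset (Finset V)}

theorem eq_of_mem_of_mem (h : X.IsEdgeCliquePartition 𝒞) {C D : Finset V} (hC : C ∈ 𝒞)
    (hD : D ∈ 𝒞) (hCD : C ≠ D) {u v : V} (huC : u ∈ C) (hvC : v ∈ C) (huD : u ∈ D)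
    (hvD : v ∈ D) : u = v := by
  by_contra huv
  exact hCD ((h.existsUnique_mem (h.isClique C hC huC hvC huv)).unique
    ⟨hC, huC, hvC⟩ ⟨hD, huD, hvD⟩)

theorem adj_iff (h : X.IsEdgeCliquePartition 𝒞) {u v : V} :
    X.Adj u v ↔ u ≠ v ∧ ∃ C ∈ 𝒞, u ∈ C ∧ v ∈ C :=
  ⟨fun huv => ⟨huv.ne, (h.existsUnique_mem huv).exists⟩,
    fun ⟨huv, C, hC, hu, hv⟩ => h.isClique C hC hu hv huv⟩

theorem eq_insert_neighborFinset [LocallyFinite X] [DecidableEq V]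
    (h : X.IsEdgeCliquePartition 𝒞) {C : Finset V} (hC : C ∈ 𝒞) {v : V} (hv : v ∈ C)
    (honly : ∀ D ∈ 𝒞, v ∈ D → D = C) : C = insert v (X.neighborFinset v) := by
  ext u
  rw [mem_insert, mem_neighborFinset]
  constructor
  · intro hu
    rcases eq_or_ne u v with rfl | huv
    · exact Or.inl rfl
    · exact Or.inr (h.isClique C hC hv hu huv.symm)
  · rintro (rfl | hvu)
    · exact hv
    · obtain ⟨D, hD, hvD, huD⟩ := (h.existsUnique_mem hvu).exists
      exact honly D hD hvD ▸ huD

theorem one_lt_card_filter_mem [LocallyFinite X] [DecidableEq V] {k : ℕ}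
    (h : X.IsEdgeCliquePartition 𝒞) (hconn : X.Connected) (hreg : X.IsRegularOfDegree k)
    (htop : X ≠ ⊤) (v : V) : 1 < #{C ∈ 𝒞 | v ∈ C} := by
  obtain ⟨w, hvw⟩ := hconn.exists_adj_of_ne_top htop v
  obtain ⟨C, hC, hvC, -⟩ := (h.existsUnique_mem hvw).exists
  by_contra! hle
  have honly : ∀ D ∈ 𝒞, v ∈ D → D = C := fun D hD hvD =>
    card_le_one.1 hle D (mem_filter.2 ⟨hD, hvD⟩) C (mem_filter.2 ⟨hC, hvC⟩)
  have hC_eq := h.eq_insert_neighborFinset hC hvC honly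
  have hcard : #C = k + 1 := by
    rw [hC_eq, card_insert_of_notMem (notMem_neighborFinset_self _ _),
      card_neighborFinset_eq_degree, hreg v]
  exact htop (hreg.eq_top_of_isNClique hconn ⟨h.isClique C hC, hcard⟩)

theorem nonempty_iso_lineGraph [DecidableEq V] (h : X.IsEdgeCliquePartition 𝒞)
    (htwo : ∀ v, #{C ∈ 𝒞 | v ∈ C} = 2) :
    Nonempty (X ≃g (intersectionGraph 𝒞).lineGraph) := by
  choose A B hAB hAB_iff using fun v => exists_pair_of_card_filter_mem_eq_two (htwo v)
  have hmem : ∀ v C, C ∈ s(A v, B v) ↔ v ∈ (C : Finset V) := fun v C =>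
    Sym2.mem_iff.trans (hAB_iff v C).symm
  let φ : V → (intersectionGraph 𝒞).edgeSet := fun v =>
    ⟨s(A v, B v), intersectionGraph_adj.2 ⟨hAB v, not_disjoint_iff.2
      ⟨v, (hmem v _).1 (Sym2.mem_mk_left _ _), (hmem v _).1 (Sym2.mem_mk_right _ _)⟩⟩⟩
  have hinj : φ.Injective := by
    intro u v huv
    have hz : s(A u, B u) = s(A v, B v) := congrArg Subtype.val huv
    have hv := hmem v
    rw [← hz] at hv
    exact h.eq_of_mem_of_mem (A u).2 (B u).2 (Subtype.coe_ne_coe.2 (hAB u))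
      ((hmem u _).1 (Sym2.mem_mk_left _ _)) ((hv _).1 (Sym2.mem_mk_left _ _))
      ((hmem u _).1 (Sym2.mem_mk_right _ _)) ((hv _).1 (Sym2.mem_mk_right _ _))
  have hsurj : φ.Surjective := by
    rintro ⟨z, hz⟩
    induction z using Sym2.ind with
    | _ C D =>
      obtain ⟨hCD, hmeet⟩ := intersectionGraph_adj.1 hz
      obtain ⟨x, hxC, hxD⟩ := not_disjoint_iff.1 hmeet
      exact ⟨x, Subtype.ext ((Sym2.mem_and_mem_iff hCD).1 ⟨(hmem x C).2 hxC, (hmem x D).2 hxD⟩)⟩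
  refine ⟨⟨Equiv.ofBijective φ ⟨hinj, hsurj⟩, fun {u v} => ?_⟩⟩
  change (intersectionGraph 𝒞).lineGraph.Adj (φ u) (φ v) ↔ X.Adj u v
  rw [lineGraph_adj_iff_exists, h.adj_iff, hinj.ne_iff]
  simp only [φ, hmem, Subtype.exists, exists_prop]

end IsEdgeCliquePartition

end SimpleGraph

open SimpleGraph in
theorem isLineGraph_of_clique_geometry_general {V : Type*} [Fintype V] [DecidableEq V]
    (X : SimpleGraph V) [DecidableRel X.Adj] (k : ℕ)
    (hconn : X.Connected) (hreg : X.IsRegularOfDegree k)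
    (hnoncomplete : X ≠ ⊤)
    (𝒞 : Finset (Finset V))
    (hclique : ∀ C ∈ 𝒞, X.IsClique (C : Set V))
    (hedge : ∀ u v : V, X.Adj u v → ∃! C, C ∈ 𝒞 ∧ u ∈ C ∧ v ∈ C)
    (hvert : ∀ v : V, (𝒞.filter fun C => v ∈ C).card ≤ 2) :
    ∃ (W : Type) (Y : SimpleGraph W), Nonempty (X ≃g Y.lineGraph) := by
  have h𝒞 : X.IsEdgeCliquePartition 𝒞 := ⟨hclique, hedge⟩
  have htwo : ∀ v, #{C ∈ 𝒞 | v ∈ C} = 2 := fun v =>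
    (hvert v).antisymm (h𝒞.one_lt_card_filter_mem hconn hreg hnoncomplete v)
  obtain ⟨φ⟩ := h𝒞.nonempty_iso_lineGraph htwo
  exact ⟨Fin #𝒞, _, ⟨φ.trans (Iso.map 𝒞.equivFin _).lineGraph⟩⟩

/-- A non-complete connected regular graph admitting a collection of maximal
cliques, such that every edge lies in exactly one of them and every vertex lies in at most
two of them, is a line graph. -/
theorem isLineGraph_of_clique_geometry {V : Type*} [Fintype V] [DecidableEq V]
    (X : SimpleGraph V) [DecidableRel X.Adj] (k : ℕ)
    (hconn : X.Connected) (hreg : X.IsRegularOfDegree k)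
    (hnoncomplete : X ≠ ⊤)
    (𝒞 : Finset (Finset V))
    (hclique : ∀ C ∈ 𝒞, X.IsClique (C : Set V))
    (hmax : ∀ C ∈ 𝒞, ∀ w : V, w ∉ C → ¬ X.IsClique (insert w (C : Set V)))
    (hedge : ∀ u v : V, X.Adj u v → ∃! C, C ∈ 𝒞 ∧ u ∈ C ∧ v ∈ C)
    (hvert : ∀ v : V, (𝒞.filter fun C => v ∈ C).card ≤ 2) :
    ∃ (W : Type) (Y : SimpleGraph W), Nonempty (X ≃g Y.lineGraph) :=
  isLineGraph_of_clique_geometry_general X k hconn hreg hnoncomplete 𝒞 hclique hedge hvert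
end

section
/- Let 𝔛 be an association scheme of rank 4 and diameter 2 on n vertices with nondiagonal constituents X_1, X_2, X_3 of degrees k_1 ≤ k_2 ≤ k_3. If k_2 ≥ γ k_3 for some γ > 0, then every pair of distinct vertices is distinguished by at least γn/6 vertices. -/
open Finset

/-- In an association scheme of rank 4 and diameter 2 on `n` vertices with
nondiagonal degrees `k 1 ≤ k 2 ≤ k 3`, if `k 2 ≥ γ k 3` for some `γ > 0`, then every pair
of distinct vertices is distinguished by at least `γ n / 6` vertices. -/
theorem distinguish_of_k2_large {V : Type*} [Fintype V] [DecidableEq V]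
    (c : V → V → Fin 4)
    (hsymm : ∀ u v : V, c u v = c v u)
    (hdiag : ∀ v : V, c v v = 0)
    (hoff : ∀ u v : V, u ≠ v → c u v ≠ 0)
    (p : Fin 4 → Fin 4 → Fin 4 → ℕ)
    (hcoh : ∀ (i j t : Fin 4) (u v : V), c u v = t →
      (Finset.univ.filter fun w => c u w = i ∧ c w v = j).card = p i j t)
    (k : Fin 4 → ℕ)
    (hk : ∀ (i : Fin 4) (v : V), (Finset.univ.filter fun w => c v w = i).card = k i)
    (hord : k 1 ≤ k 2 ∧ k 2 ≤ k 3)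
    (hdiam : ∀ i : Fin 4, i ≠ 0 → ∀ u v : V, u ≠ v →
      c u v = i ∨ ∃ w, c u w = i ∧ c w v = i)
    (γ : ℝ) (hγ : 0 < γ) (hk2 : γ * (k 3 : ℝ) ≤ (k 2 : ℝ)) :
    ∀ u v : V, u ≠ v →
      γ * (Fintype.card V : ℝ) / 6 ≤
        ((Finset.univ.filter fun x => c x u ≠ c x v).card : ℝ) := by
  intro u v huv
  classical
  obtain ⟨h12, h23⟩ := hord
  -- the number of vertices seeing a and b the same way depends only on c a b
  have hsame : ∀ a b : V, (univ.filter fun x => c x a = c x b).card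
      = ∑ r : Fin 4, p r r (c a b) := by
    intro a b
    rw [Finset.card_eq_sum_card_fiberwise (f := fun x => c x a)
      (t := (univ : Finset (Fin 4))) (fun x _ => mem_univ _)]
    refine Finset.sum_congr rfl fun r _ => ?_
    rw [← hcoh r r (c a b) a b rfl]
    congr 1
    ext x
    simp only [mem_filter, mem_univ, true_and, hsymm a x]
    constructor
    · rintro ⟨h1, h2⟩
      exact ⟨h2, h1.symm.trans h2⟩
    · rintro ⟨h1, h2⟩
      exact ⟨h1.trans h2.symm, h1⟩
  -- pairs of the same color have the same distinguishing number
  have hEq : ∀ a b a' b' : V, c a b = c a' b' →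
      (univ.filter fun x => c x a ≠ c x b).card
        = (univ.filter fun x => c x a' ≠ c x b').card := by
    intro a b a' b' hcc
    have h1 := hsame a b
    have h2 := hsame a' b'
    rw [hcc] at h1
    have s1 := Finset.card_filter_add_card_filter_not
      (s := (univ : Finset V)) (p := fun x => c x a = c x b)
    have s2 := Finset.card_filter_add_card_filter_not
      (s := (univ : Finset V)) (p := fun x => c x a' = c x b')
    simp only [ne_eq]
    omega
  have hk0 : k 0 = 1 := by
    rw [← hk 0 u]
    rw [show (univ.filter fun w => c u w = 0) = {u} from ?_]
    · exact card_singleton u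
    · ext w
      simp only [mem_filter, mem_univ, true_and, mem_singleton]
      constructor
      · intro h
        by_contra hne
        exact hoff u w (fun h' => hne h'.symm) h
      · intro h
        rw [h]
        exact hdiag u
  have hnsum : Fintype.card V = k 0 + k 1 + k 2 + k 3 := by
    have h := Finset.card_eq_sum_card_fiberwise (s := (univ : Finset V))
      (t := (univ : Finset (Fin 4))) (f := fun x => c u x) (fun x _ => mem_univ _)
    rw [card_univ] at h
    rw [h, Fin.sum_univ_four]
    simp only [hk]
  have hkv : 1 ≤ k (c u v) := by
    rw [← hk (c u v) u]
    exact card_pos.mpr ⟨v, by simp⟩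
  have hcases : ∀ j : Fin 4, j = 0 ∨ j = 1 ∨ j = 2 ∨ j = 3 := by decide
  have hk3pos : 1 ≤ k 3 := by
    rcases hcases (c u v) with h|h|h|h
    · exact absurd h (hoff u v huv)
    · rw [h] at hkv; omega
    · rw [h] at hkv; omega
    · rw [h] at hkv; omega
  have hk2pos : 1 ≤ k 2 := by
    by_contra hno
    have h0 : k 2 = 0 := by omega
    have hpos : (0:ℝ) < γ * (k 3 : ℝ) := by
      apply mul_pos hγ
      exact_mod_cast hk3pos
    rw [h0] at hk2
    push_cast at hk2
    linarith
  have hn3 : Fintype.card V ≤ 3 * k 3 + 1 := by omega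
  -- double counting: k2² = Σ_t k_t p(2,2;t)
  have hsum : k 2 * k 2 = k 0 * p 2 2 0 + k 1 * p 2 2 1 + k 2 * p 2 2 2 + k 3 * p 2 2 3 := by
    have key : ∑ w : V, p 2 2 (c u w) = k 2 * k 2 := by
      have e1 : ∀ w : V, p 2 2 (c u w) = (univ.filter fun x => c u x = 2 ∧ c x w = 2).card :=
        fun w => (hcoh 2 2 (c u w) u w rfl).symm
      calc ∑ w : V, p 2 2 (c u w)
          = ∑ w : V, ∑ x ∈ univ.filter fun x => c u x = 2, (if c x w = 2 then 1 else 0) := by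
            refine Finset.sum_congr rfl fun w _ => ?_
            rw [e1 w, ← Finset.filter_filter, Finset.card_filter]
        _ = ∑ x ∈ univ.filter (fun x => c u x = 2), ∑ w : V, (if c x w = 2 then 1 else 0) :=
            Finset.sum_comm
        _ = ∑ x ∈ univ.filter (fun x => c u x = 2), k 2 := by
            refine Finset.sum_congr rfl fun x _ => ?_
            rw [← Finset.card_filter, hk 2 x]
        _ = k 2 * k 2 := by
            rw [Finset.sum_const, hk 2 u, smul_eq_mul]
    have key2 : ∑ w : V, p 2 2 (c u w) = ∑ t : Fin 4, k t * p 2 2 t := by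
      rw [← Finset.sum_fiberwise (univ : Finset V) (fun w => c u w) (fun w => p 2 2 (c u w))]
      refine Finset.sum_congr rfl fun t _ => ?_
      rw [Finset.sum_congr rfl (fun w hw => by rw [(Finset.mem_filter.mp hw).2]),
        Finset.sum_const, hk t u, smul_eq_mul]
    rw [← key, key2, Fin.sum_univ_four]
  have hp0 : p 2 2 0 = k 2 := by
    rw [← hcoh 2 2 0 u u (hdiag u), ← hk 2 u]
    congr 1
    ext x
    simp only [mem_filter, mem_univ, true_and]
    constructor
    · exact fun h => h.1
    · exact fun h => ⟨h, by rw [← hsymm u x]; exact h⟩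
  have h5 : p 2 2 2 + p 2 2 3 + 1 ≤ k 2 := by
    have hm : k 2 * (p 2 2 2 + p 2 2 3 + 1) ≤ k 2 * k 2 := by
      have e : k 2 * (p 2 2 2 + p 2 2 3 + 1) = k 2 * p 2 2 2 + k 2 * p 2 2 3 + k 2 := by ring
      have e2 : k 2 * p 2 2 3 ≤ k 3 * p 2 2 3 := Nat.mul_le_mul_right _ h23
      rw [hsum, hk0, hp0]
      nlinarith [Nat.zero_le (k 1 * p 2 2 1)]
    exact Nat.le_of_mul_le_mul_left hm hk2pos
  obtain ⟨j, hj0, hjk, hjp⟩ :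
      ∃ j : Fin 4, j ≠ 0 ∧ k 2 ≤ k j ∧ 2 * p 2 2 j + 1 ≤ k 2 := by
    by_cases hc : p 2 2 2 ≤ p 2 2 3
    · exact ⟨2, by decide, le_refl _, by omega⟩
    · exact ⟨3, by decide, h23, by omega⟩
  obtain ⟨b, hb⟩ : ∃ b, c u b = j := by
    have hpos : 0 < (univ.filter fun w => c u w = j).card := by
      rw [hk j u]; omega
    obtain ⟨b, hbm⟩ := Finset.card_pos.mp hpos
    exact ⟨b, (Finset.mem_filter.mp hbm).2⟩
  have hcbu : c b u = j := (hsymm u b).symm.trans hb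
  have e1 : (univ.filter fun x => c x u = 2 ∧ c x b = 2).card = p 2 2 j := by
    rw [← hcoh 2 2 j u b hb]
    congr 1; ext x
    simp only [mem_filter, mem_univ, true_and]
    constructor
    · exact fun h => ⟨by rw [hsymm u x]; exact h.1, h.2⟩
    · exact fun h => ⟨by rw [← hsymm u x]; exact h.1, h.2⟩
  have e1' : (univ.filter fun x => c x b = 2 ∧ c x u = 2).card = p 2 2 j := by
    rw [← hcoh 2 2 j b u hcbu]
    congr 1; ext x
    simp only [mem_filter, mem_univ, true_and]
    constructor
    · exact fun h => ⟨by rw [hsymm b x]; exact h.1, h.2⟩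
    · exact fun h => ⟨by rw [← hsymm b x]; exact h.1, h.2⟩
  have e2 : (univ.filter fun x => c x u = 2).card = k 2 := by
    rw [← hk 2 u]
    congr 1; ext x
    simp only [mem_filter, mem_univ, true_and]
    constructor
    · exact fun h => by rw [hsymm u x]; exact h
    · exact fun h => by rw [← hsymm u x]; exact h
  have e2' : (univ.filter fun x => c x b = 2).card = k 2 := by
    rw [← hk 2 b]
    congr 1; ext x
    simp only [mem_filter, mem_univ, true_and]
    constructor
    · exact fun h => by rw [hsymm b x]; exact h
    · exact fun h => by rw [← hsymm b x]; exact h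
  have s1 := Finset.card_filter_add_card_filter_not
    (s := univ.filter fun x => c x u = 2) (p := fun x => c x b = 2)
  rw [Finset.filter_filter, Finset.filter_filter] at s1
  have s2 := Finset.card_filter_add_card_filter_not
    (s := univ.filter fun x => c x b = 2) (p := fun x => c x u = 2)
  rw [Finset.filter_filter, Finset.filter_filter] at s2
  rw [e1, e2] at s1
  rw [e1', e2'] at s2
  have hDlow : k 2 + 1 ≤ (univ.filter fun x => c x u ≠ c x b).card := by
    have hsub : ((univ.filter fun x => c x u = 2 ∧ ¬ c x b = 2) ∪
        (univ.filter fun x => c x b = 2 ∧ ¬ c x u = 2)) ⊆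
        univ.filter fun x => c x u ≠ c x b := by
      intro x hx
      simp only [mem_union, mem_filter, mem_univ, true_and, ne_eq] at hx ⊢
      rcases hx with ⟨ha, hb'⟩ | ⟨ha, hb'⟩
      · intro h; rw [h] at ha; exact hb' ha
      · intro h; rw [← h] at ha; exact hb' ha
    have hdisj : Disjoint (univ.filter fun x => c x u = 2 ∧ ¬ c x b = 2)
        (univ.filter fun x => c x b = 2 ∧ ¬ c x u = 2) := by
      rw [Finset.disjoint_left]
      intro x hx1 hx2
      simp only [mem_filter] at hx1 hx2
      exact hx2.2.2 hx1.2.1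
    have hcard := Finset.card_le_card hsub
    rw [Finset.card_union_of_disjoint hdisj] at hcard
    omega
  have hub : u ≠ b := by
    intro h
    rw [← h, hdiag u] at hb
    exact hj0 hb.symm
  have hfin : k 2 + 1 ≤ 2 * (univ.filter fun x => c x u ≠ c x v).card := by
    rcases hdiam (c u v) (hoff u v huv) u b hub with hcase | ⟨w, hw1, hw2⟩
    · have := hEq u b u v hcase
      omega
    · have hsub2 : (univ.filter fun x => c x u ≠ c x b) ⊆
          (univ.filter fun x => c x u ≠ c x w) ∪ (univ.filter fun x => c x w ≠ c x b) := by
        intro x hx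
        simp only [mem_union, mem_filter, mem_univ, true_and, ne_eq] at hx ⊢
        by_contra hcon
        push_neg at hcon
        exact hx (hcon.1.trans hcon.2)
      have hle := (Finset.card_le_card hsub2).trans (Finset.card_union_le _ _)
      have q1 := hEq u w u v hw1
      have q2 := hEq w b u v hw2
      omega
  have hγ1 : γ ≤ 1 := by
    by_contra hno
    push_neg at hno
    have h3 : (1:ℝ) ≤ (k 3 : ℝ) := by exact_mod_cast hk3pos
    have h23R : (k 2 : ℝ) ≤ (k 3 : ℝ) := by exact_mod_cast h23
    have := mul_lt_mul_of_pos_right hno (lt_of_lt_of_le one_pos h3)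
    rw [one_mul] at this
    linarith
  have c1 : (Fintype.card V : ℝ) ≤ 3 * (k 3 : ℝ) + 1 := by exact_mod_cast hn3
  have c2 : (k 2 : ℝ) + 1 ≤ 2 * ((univ.filter fun x => c x u ≠ c x v).card : ℝ) := by
    exact_mod_cast hfin
  have c3 : γ * (Fintype.card V : ℝ) ≤ γ * (3 * (k 3:ℝ) + 1) :=
    mul_le_mul_of_nonneg_left c1 hγ.le
  nlinarith [hk2, c2, c3, hγ1]
end

section
/- Let 𝔛 be an association scheme with intersection numbers p(i,j;t). Suppose there exist vertices u,v,w with c(u,v)=s, c(v,w)=r, c(u,w)=t. Then for all colors i,j,l: p(i,j;s) + p(j,l;r) ≤ k_j + p(i,l;t), where k_j is the degree of color j. -/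
open Finset

/-- (Triangle inequality for intersection numbers.) In an association
scheme, if there is a triangle with side colors `(s, r', t)`, then for all colors
`i, j, l`: `p(i,j;s) + p(j,l;r') ≤ k j + p(i,l;t)`. -/
theorem intersection_triangle_ineq {V : Type*} [Fintype V] [DecidableEq V] {r : ℕ}
    (c : V → V → Fin r)
    (hsymm : ∀ u v : V, c u v = c v u)
    (hhom : ∀ u v : V, c u u = c v v)
    (hconf1 : ∀ v u w : V, u ≠ w → c v v ≠ c u w)
    (p : Fin r → Fin r → Fin r → ℕ)
    (hcoh : ∀ (i j t : Fin r) (u v : V), c u v = t →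
      (Finset.univ.filter fun w => c u w = i ∧ c w v = j).card = p i j t)
    (k : Fin r → ℕ)
    (hk : ∀ (i : Fin r) (v : V), (Finset.univ.filter fun w => c v w = i).card = k i)
    (s r' t : Fin r)
    (htri : ∃ u v w : V, c u v = s ∧ c v w = r' ∧ c u w = t)
    (i j l : Fin r) :
    p i j s + p j l r' ≤ k j + p i l t := by
  obtain ⟨u, v, w, huv, hvw, huw⟩ := htri
  rw [← hcoh i j s u v huv, ← hcoh j l r' v w hvw, ← hcoh i l t u w huw, ← hk j v]
  simp only [Finset.card_filter]
  rw [← Finset.sum_add_distrib, ← Finset.sum_add_distrib]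
  apply Finset.sum_le_sum
  intro x _
  have hB := hsymm v x
  by_cases hA : c u x = i <;> by_cases hb : c v x = j <;> by_cases hC : c x w = l <;>
    simp_all
end

section
/- Fix 0 < δ < 1 and an integer r ≥ 3. Let 𝔛 be a primitive coherent configuration of rank r on n vertices in which every nondiagonal constituent has degree at most δn. Then the motion of 𝔛 (the minimal degree of Aut(𝔛)) satisfies motion(𝔛) ≥ D_min(𝔛) ≥ min(δ, 1−δ)·n / (6(r−1)). -/
open Finset

/-!
Write `D(u, v)` for the number of vertices `x` with `c(x, u) ≠ c(x, v)`. By coherence `D(u, v)`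
depends only on the colour `c(u, v)`, and `D` satisfies the triangle inequality. The colours
`c(u, w)` of the vertices `w` reachable from `u` in at most `d` steps of a fixed colour are obtained
by iterating a map on sets of colours, which stabilises after `r - 1` steps; by primitivity every
vertex is reached, so `D(u, w) ≤ (r - 1) D(u, v)` for all `w`.

On the other hand, the degree bound lets one pick a set `I` of colours whose degrees sum to some
`S` with `m n / 2 ≤ S ≤ n - m n / 2`, where `m = min(δ, 1 - δ)`. Counting the pairs `(w, z)` with
`c(u, z) ∈ I` and `c(w, z) ∈ I` yields a `w` whose `I`-neighbourhood meets that of `u` in at most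
`S² / n` vertices, so `D(u, w) ≥ S (n - S) / n ≥ m n / 4`. Finally, a vertex distinguishing `u`
from `σ u` is moved by the automorphism `σ`.
-/

theorem Finset.exists_subset_le_sum_lt_add {ι M : Type*} [AddCommGroup M] [LinearOrder M]
    [IsOrderedAddMonoid M] (s : Finset ι) (f : ι → M) {T B : M} (hT : 0 < T)
    (hTs : T ≤ ∑ i ∈ s, f i) (hB : ∀ i ∈ s, f i ≤ B) :
    ∃ t ⊆ s, T ≤ ∑ i ∈ t, f i ∧ ∑ i ∈ t, f i < T + B := by
  classical
  induction s using Finset.induction_on with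
  | empty => exact absurd hTs (by simpa using hT)
  | insert a s ha ih =>
    by_cases hlt : ∑ i ∈ insert a s, f i < T + B
    · exact ⟨_, Subset.rfl, hTs, hlt⟩
    rw [not_lt, sum_insert ha, add_comm T] at hlt
    obtain ⟨t, hts, ht⟩ := ih (le_of_add_le_add_left (hlt.trans (add_le_add
      (hB a (mem_insert_self a s)) le_rfl))) fun i hi => hB i (mem_insert_of_mem hi)
    exact ⟨t, hts.trans (subset_insert a s), ht⟩

theorem Finset.iterate_subset_iterate_card_sub_one {α : Type*} [Fintype α] [DecidableEq α]
    {F : Finset α → Finset α} (hF : ∀ s, s ⊆ F s) {s : Finset α} (hs : s.Nonempty) (d : ℕ) :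
    F^[d] s ⊆ F^[Fintype.card α - 1] s := by
  have hmono : Monotone fun e => F^[e] s :=
    monotone_nat_of_le_succ fun e => by
      simp only [Function.iterate_succ_apply']
      exact hF _
  have key : ∀ e, e + 1 ≤ #(F^[e] s) ∨ F (F^[e] s) = F^[e] s := by
    intro e
    induction e with
    | zero => exact Or.inl hs.card_pos
    | succ e ih =>
      rw [Function.iterate_succ_apply']
      by_cases hfix : F (F^[e] s) = F^[e] s
      · exact Or.inr (by rw [hfix, hfix])
      · have := card_lt_card (ssubset_of_subset_of_ne (hF _) (Ne.symm hfix))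
        exact Or.inl (ih.elim (fun h => by omega) (absurd · hfix))
  rcases key (Fintype.card α - 1) with hcard | hfix
  · have : 0 < Fintype.card α := Fintype.card_pos_iff.2 ⟨hs.choose⟩
    rw [eq_univ_of_card (F^[Fintype.card α - 1] s) (le_antisymm (card_le_univ _) (by omega))]
    exact subset_univ _
  · rcases le_total d (Fintype.card α - 1) with hd | hd
    · exact hmono hd
    · obtain ⟨e, rfl⟩ := Nat.exists_eq_add_of_le hd
      rw [add_comm, Function.iterate_add_apply, Function.iterate_fixed hfix]

theorem exists_card_mul_le_card_mul_card_sdiff_add {β : Type*} [Fintype β] [DecidableEq β]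
    (N : β → Finset β) {S : ℕ} (hout : ∀ a, #(N a) = S) (hin : ∀ b, #{a | b ∈ N a} = S)
    (u : β) : ∃ v, Fintype.card β * S ≤ Fintype.card β * #(N u \ N v) + S * S := by
  have hsum : ∑ v, #(N u ∩ N v) = S * S := by
    calc ∑ v, #(N u ∩ N v) = ∑ v, ∑ z ∈ N u, if z ∈ N v then 1 else 0 := by
          simp only [sum_boole, Nat.cast_id, filter_mem_eq_inter]
      _ = ∑ z ∈ N u, #{v | z ∈ N v} := by
          rw [sum_comm]
          simp only [sum_boole, Nat.cast_id]
      _ = S * S := by rw [sum_const_nat fun z _ => hin z, hout]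
  obtain ⟨v, -, hv⟩ := exists_le_of_sum_le (s := univ) ⟨u, mem_univ u⟩
    (f := fun v => Fintype.card β * #(N u ∩ N v)) (g := fun _ => S * S)
    (by rw [← mul_sum, hsum, sum_const, card_univ, smul_eq_mul])
  refine ⟨v, ?_⟩
  have := card_sdiff_add_card_inter (N u) (N v)
  rw [hout] at this
  calc Fintype.card β * S = Fintype.card β * #(N u \ N v) + Fintype.card β * #(N u ∩ N v) := by
        rw [← this, mul_add]
    _ ≤ _ := Nat.add_le_add_left hv _

def distinguishingNumber {V α : Type*} [Fintype V] [DecidableEq α] (c : V → V → α) (u v : V) :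
    ℕ :=
  #{x | c x u ≠ c x v}

section CoherentConfiguration

variable {V α : Type*} {c : V → V → α}

theorem apply_eq_apply_iff_of_converse {star : α → α} (hconv : ∀ u v, c v u = star (c u v))
    (x u v : V) : c x u = c x v ↔ c u x = c v x := by
  constructor <;> intro h
  · rw [hconv x u, hconv x v, h]
  · rw [hconv u x, hconv v x, h]

variable [Fintype V] [DecidableEq α]

theorem distinguishingNumber_self (u : V) : distinguishingNumber c u u = 0 := by
  simp [distinguishingNumber]

theorem distinguishingNumber_le_add [DecidableEq V] (u v w : V) :
    distinguishingNumber c u w ≤ distinguishingNumber c u v + distinguishingNumber c v w := by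
  refine (card_le_card fun x hx => ?_).trans (card_union_le _ _)
  simp only [mem_filter, mem_univ, true_and, mem_union] at hx ⊢
  by_contra! h
  exact hx (h.1.trans h.2)

theorem distinguishingNumber_apply_le_card_support [DecidableEq V] {σ : Equiv.Perm V}
    (hσ : ∀ u v, c (σ u) (σ v) = c u v) (u : V) :
    distinguishingNumber c u (σ u) ≤ #σ.support := by
  refine card_le_card fun x hx => ?_
  simp only [mem_filter, mem_univ, true_and] at hx
  rw [Equiv.Perm.mem_support]
  intro hfix
  exact hx (by rw [← hσ x u, hfix])

def HasIntersectionNumbers (c : V → V → α) (p : α → α → α → ℕ) : Prop :=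
  ∀ (i j t : α) (u v : V), c u v = t → #{w | c u w = i ∧ c w v = j} = p i j t

variable [Fintype α] {p : α → α → α → ℕ}

theorem card_filter_apply_eq_apply {star : α → α} (hconv : ∀ u v, c v u = star (c u v))
    (hcoh : HasIntersectionNumbers c p)
    (u v : V) : #{x | c u x = c v x} = ∑ j, p j (star j) (c u v) := by
  rw [card_eq_sum_card_fiberwise (f := c u) (t := univ) fun _ _ => mem_coe.2 (mem_univ _)]
  refine sum_congr rfl fun j _ => ?_
  rw [filter_filter, ← hcoh j (star j) _ u v rfl]
  congr 1
  ext x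
  simp only [mem_filter, mem_univ, true_and]
  constructor
  · rintro ⟨h, rfl⟩
    exact ⟨rfl, by rw [hconv v x, h]⟩
  · rintro ⟨rfl, h⟩
    exact ⟨by rw [hconv x v, h, ← hconv u x, ← hconv x u], rfl⟩

theorem distinguishingNumber_eq_of_apply_eq {star : α → α}
    (hconv : ∀ u v, c v u = star (c u v))
    (hcoh : HasIntersectionNumbers c p)
    {u v u' v' : V} (h : c u v = c u' v') :
    distinguishingNumber c u v = distinguishingNumber c u' v' := by
  have key : ∀ u v : V,
      distinguishingNumber c u v + ∑ j, p j (star j) (c u v) = Fintype.card V := by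
    intro u v
    rw [← card_filter_apply_eq_apply hconv hcoh, distinguishingNumber, ← card_univ, add_comm,
      ← filter_congr (s := univ) fun x _ => apply_eq_apply_iff_of_converse hconv x u v]
    exact card_filter_add_card_filter_not _
  have h₁ := key u v
  have h₂ := key u' v'
  rw [h] at h₁
  omega

/-- If `C` is the set of colours `c u w` of the vertices `w` reachable from `u` in at most `d`
steps of colour `i`, then `colorStep p i C` is the set of colours for `d + 1` steps. -/
def colorStep (p : α → α → α → ℕ) (i : α) (C : Finset α) : Finset α :=
  C ∪ ({t | ∃ j ∈ C, p j i t ≠ 0} : Finset α)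

theorem apply_mem_iterate_colorStep {d₀ : α} (hdiag : ∀ v, c v v = d₀)
    (hcoh : HasIntersectionNumbers c p)
    {i : α} {q : ℕ → V} {ℓ : ℕ} (hq : ∀ t < ℓ, c (q t) (q (t + 1)) = i) :
    c (q 0) (q ℓ) ∈ (colorStep p i)^[ℓ] {d₀} := by
  induction ℓ with
  | zero => simp [hdiag]
  | succ ℓ ih =>
    rw [Function.iterate_succ_apply']
    refine mem_union_right _ (mem_filter.2 ⟨mem_univ _, _, ih fun t ht => hq t (by omega), ?_⟩)
    rw [← hcoh _ _ _ _ _ rfl]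
    exact card_ne_zero_of_mem (mem_filter.2 ⟨mem_univ _, rfl, hq ℓ (lt_add_one ℓ)⟩)

theorem distinguishingNumber_le_of_mem_iterate_colorStep [DecidableEq V] {star : α → α} {d₀ : α}
    (hconv : ∀ u v, c v u = star (c u v)) (hdiag : ∀ v, c v v = d₀)
    (hcoh : HasIntersectionNumbers c p)
    {u' v' u w : V} {d : ℕ} (h : c u w ∈ (colorStep p (c u' v'))^[d] {d₀}) :
    distinguishingNumber c u w ≤ d * distinguishingNumber c u' v' := by
  induction d generalizing w with
  | zero =>
    rw [Function.iterate_zero_apply, mem_singleton, ← hdiag u] at h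
    rw [distinguishingNumber_eq_of_apply_eq hconv hcoh h, distinguishingNumber_self, zero_mul]
  | succ d ih =>
    rw [Function.iterate_succ_apply', colorStep, mem_union, mem_filter] at h
    rcases h with h | ⟨-, j, hj, hp⟩
    · exact (ih h).trans (Nat.mul_le_mul_right _ d.le_succ)
    rw [← hcoh j _ _ u w rfl] at hp
    obtain ⟨x, hx⟩ := card_ne_zero.1 hp
    simp only [mem_filter, mem_univ, true_and] at hx
    calc distinguishingNumber c u w
        ≤ distinguishingNumber c u x + distinguishingNumber c x w :=
          distinguishingNumber_le_add u x w
      _ ≤ d * distinguishingNumber c u' v' + distinguishingNumber c u' v' :=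
          add_le_add (ih (hx.1 ▸ hj)) (distinguishingNumber_eq_of_apply_eq hconv hcoh hx.2).le
      _ = (d + 1) * distinguishingNumber c u' v' := by ring

theorem distinguishingNumber_le_card_sub_one_mul [DecidableEq V] {star : α → α} {d₀ : α}
    (hconv : ∀ u v, c v u = star (c u v)) (hdiag : ∀ v, c v v = d₀)
    (hcoh : HasIntersectionNumbers c p)
    {u' v' : V} (hconn : ∀ u w : V, u ≠ w → ∃ (ℓ : ℕ) (q : ℕ → V),
      q 0 = u ∧ q ℓ = w ∧ ∀ t < ℓ, c (q t) (q (t + 1)) = c u' v')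
    (u w : V) :
    distinguishingNumber c u w ≤ (Fintype.card α - 1) * distinguishingNumber c u' v' := by
  rcases eq_or_ne u w with rfl | huw
  · simp [distinguishingNumber_self]
  obtain ⟨ℓ, q, rfl, rfl, hq⟩ := hconn u w huw
  refine distinguishingNumber_le_of_mem_iterate_colorStep hconv hdiag hcoh ?_
  exact iterate_subset_iterate_card_sub_one (fun _ => subset_union_left) (singleton_nonempty d₀) ℓ
    (apply_mem_iterate_colorStep hdiag hcoh hq)

theorem card_filter_apply_eq_left {d₀ : α} {k : α → ℕ} (hdiag : ∀ v, c v v = d₀)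
    (hcoh : HasIntersectionNumbers c p)
    (hk : ∀ (i : α) (v : V), #{w | c v w = i} = k i) (i : α) (z : V) :
    #{x | c x z = i} = k i := by
  have hconst : ∀ z, #{x | c x z = i} = ∑ j, p j i d₀ := by
    intro z
    rw [card_eq_sum_card_fiberwise (f := c z) (t := univ) fun _ _ => mem_coe.2 (mem_univ _)]
    refine sum_congr rfl fun j _ => ?_
    rw [filter_filter, ← hcoh j i d₀ z z (hdiag z)]
    simp only [and_comm]
  have := card_mul_eq_card_mul (fun x z => c x z = i) (s := univ) (t := univ)
    (fun x _ => hk i x) (fun z _ => hconst z)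
  rw [hconst z]
  exact (Nat.eq_of_mul_eq_mul_left (card_pos.2 ⟨z, mem_univ z⟩) this).symm

theorem exists_card_mul_le_card_mul_distinguishingNumber_add [DecidableEq V] {star : α → α}
    {d₀ : α} {k : α → ℕ} (hconv : ∀ u v, c v u = star (c u v)) (hdiag : ∀ v, c v v = d₀)
    (hcoh : HasIntersectionNumbers c p)
    (hk : ∀ (i : α) (v : V), #{w | c v w = i} = k i) (I : Finset α) (u : V) :
    ∃ v, Fintype.card V * ∑ i ∈ I, k i ≤
      Fintype.card V * distinguishingNumber c u v + (∑ i ∈ I, k i) * ∑ i ∈ I, k i := by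
  obtain ⟨v, hv⟩ := exists_card_mul_le_card_mul_card_sdiff_add
    (fun w => ({z | c w z ∈ I} : Finset V))
    (fun w => by
      rw [← sum_card_fiberwise_eq_card_filter]
      exact sum_congr rfl fun i _ => hk i w)
    (fun z => by
      simp only [mem_filter, mem_univ, true_and]
      rw [← sum_card_fiberwise_eq_card_filter]
      exact sum_congr rfl fun i _ => card_filter_apply_eq_left hdiag hcoh hk i z) u
  refine ⟨v, hv.trans (Nat.add_le_add_right (Nat.mul_le_mul_left _ (card_le_card ?_)) _)⟩
  intro z hz
  simp only [mem_sdiff, mem_filter, mem_univ, true_and] at hz ⊢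
  rw [ne_eq, apply_eq_apply_iff_of_converse hconv]
  exact fun h => hz.2 (h ▸ hz.1)

theorem exists_mul_le_four_mul_distinguishingNumber [DecidableEq V] {star : α → α} {d₀ : α}
    {k : α → ℕ} {δ : ℝ} (hδ0 : 0 < δ) (hδ1 : δ < 1) (hconv : ∀ u v, c v u = star (c u v))
    (hdiag : ∀ v, c v v = d₀) (hoff : ∀ u v, u ≠ v → c u v ≠ d₀)
    (hcoh : HasIntersectionNumbers c p)
    (hk : ∀ (i : α) (v : V), #{w | c v w = i} = k i)
    (hdeg : ∀ i, i ≠ d₀ → (k i : ℝ) ≤ δ * Fintype.card V) {u v : V} (huv : u ≠ v) :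
    ∃ w, min δ (1 - δ) * Fintype.card V ≤ 4 * distinguishingNumber c u w := by
  set n := Fintype.card V
  set m := min δ (1 - δ)
  have hn : (2 : ℝ) ≤ n := by exact_mod_cast Fintype.one_lt_card_iff.2 ⟨u, v, huv⟩
  have hn₀ : (0 : ℝ) < n := by linarith
  have hm : 0 < m := lt_min hδ0 (by linarith)
  have hmδ : m + δ ≤ 1 := by linarith [min_le_right δ (1 - δ)]
  have hk₀ : k d₀ = 1 := by
    rw [← hk d₀ u, card_eq_one]
    refine ⟨u, ext fun w => ?_⟩
    simp only [mem_filter, mem_univ, true_and, mem_singleton]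
    exact ⟨fun h => by_contra fun hw => hoff u w (Ne.symm hw) h, fun h => h ▸ hdiag u⟩
  have htot : ∑ i ∈ univ.erase d₀, (k i : ℝ) = n - 1 := by
    have : ∑ i, k i = n := by
      simp_rw [← hk _ u]
      rw [sum_card_fiberwise_eq_card_filter]
      simp [n]
    rw [← sum_erase_add _ _ (mem_univ d₀), hk₀] at this
    rw [← this]
    push_cast
    ring
  obtain ⟨I, -, hI₁, hI₂⟩ := exists_subset_le_sum_lt_add (univ.erase d₀) (fun i => (k i : ℝ))
    (T := m * n / 2) (B := δ * n) (by positivity)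
    (by rw [htot]; nlinarith [min_le_left δ (1 - δ)]) fun i hi => hdeg i (ne_of_mem_erase hi)
  obtain ⟨w, hw⟩ := exists_card_mul_le_card_mul_distinguishingNumber_add hconv hdiag hcoh hk I u
  refine ⟨w, ?_⟩
  have hwR : (n : ℝ) * ∑ i ∈ I, (k i : ℝ) ≤
      n * distinguishingNumber c u w + (∑ i ∈ I, (k i : ℝ)) * ∑ i ∈ I, (k i : ℝ) := by
    exact_mod_cast hw
  set S := ∑ i ∈ I, (k i : ℝ)
  have hS : S ≤ n - m * n / 2 := by nlinarith
  -- `n D(u, w) ≥ S (n - S) ≥ (m n / 2) (n - m n / 2) ≥ m n² / 4`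
  nlinarith [mul_nonneg (sub_nonneg.2 hI₁) (sub_nonneg.2 hS), mul_pos hm (mul_pos hn₀ hn₀)]

end CoherentConfiguration

/-- Fix `0 < δ < 1` and `r ≥ 3`. If every nondiagonal constituent of a
primitive coherent configuration of rank `r` on `n` vertices has degree at most `δ n`,
then `D_min ≥ min(δ, 1-δ) n / (6 (r-1))`, and consequently every non-identity
automorphism moves at least that many points (`motion ≥ D_min ≥ ...`). -/
theorem motion_of_bounded_degrees {V : Type*} [Fintype V] [DecidableEq V] {r : ℕ}
    (hr : 3 ≤ r) (δ : ℝ) (hδ0 : 0 < δ) (hδ1 : δ < 1)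
    (d0 : Fin r) (c : V → V → Fin r)
    (hdiag : ∀ v : V, c v v = d0)
    (hoff : ∀ u v : V, u ≠ v → c u v ≠ d0)
    (hconf2 : ∀ i : Fin r, ∃ istar : Fin r, ∀ u v : V, c u v = i → c v u = istar)
    (p : Fin r → Fin r → Fin r → ℕ)
    (hcoh : ∀ (i j t : Fin r) (u v : V), c u v = t →
      (Finset.univ.filter fun w => c u w = i ∧ c w v = j).card = p i j t)
    (k : Fin r → ℕ)
    (hk : ∀ (i : Fin r) (v : V), (Finset.univ.filter fun w => c v w = i).card = k i)
    -- primitivity: each nondiagonal constituent is strongly connected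
    (hprim : ∀ i : Fin r, i ≠ d0 → ∀ u v : V, u ≠ v →
      ∃ (ℓ : ℕ) (q : ℕ → V), q 0 = u ∧ q ℓ = v ∧ ∀ t < ℓ, c (q t) (q (t + 1)) = i)
    (hdeg : ∀ i : Fin r, i ≠ d0 → (k i : ℝ) ≤ δ * (Fintype.card V : ℝ)) :
    (∀ u v : V, u ≠ v →
      min δ (1 - δ) * (Fintype.card V : ℝ) / (6 * (r - 1 : ℝ)) ≤
        ((Finset.univ.filter fun x => c x u ≠ c x v).card : ℝ)) ∧
    (∀ σ : Equiv.Perm V, (∀ u v : V, c (σ u) (σ v) = c u v) → σ ≠ 1 →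
      min δ (1 - δ) * (Fintype.card V : ℝ) / (6 * (r - 1 : ℝ)) ≤
        ((Finset.univ.filter fun x => σ x ≠ x).card : ℝ)) := by
  choose star hstar using hconf2
  have hconv : ∀ u v, c v u = star (c u v) := fun u v => hstar _ u v rfl
  have hD : ∀ u v : V, u ≠ v → min δ (1 - δ) * (Fintype.card V : ℝ) / (6 * (r - 1 : ℝ)) ≤
      distinguishingNumber c u v := by
    intro u v huv
    obtain ⟨w, hw⟩ := exists_mul_le_four_mul_distinguishingNumber hδ0 hδ1 hconv hdiag hoff hcoh
      hk hdeg huv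
    have hle := distinguishingNumber_le_card_sub_one_mul hconv hdiag hcoh
      (hprim _ (hoff u v huv)) u w
    rw [Fintype.card_fin] at hle
    have hleR : (distinguishingNumber c u w : ℝ) ≤ (r - 1 : ℝ) * distinguishingNumber c u v := by
      have := (Nat.cast_le (α := ℝ)).2 hle
      rwa [Nat.cast_mul, Nat.cast_sub (by omega : 1 ≤ r), Nat.cast_one] at this
    have hr' : (2 : ℝ) ≤ r - 1 := by
      have : (3 : ℝ) ≤ r := by exact_mod_cast hr
      linarith
    have hm : 0 ≤ min δ (1 - δ) * Fintype.card V := by positivity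
    rw [div_le_iff₀ (by positivity)]
    nlinarith
  refine ⟨hD, fun σ hσ hσ1 => ?_⟩
  obtain ⟨u, hu⟩ : ∃ u, σ u ≠ u := not_forall.1 fun h => hσ1 (Equiv.ext h)
  exact (hD u (σ u) (Ne.symm hu)).trans
    (by exact_mod_cast distinguishingNumber_apply_le_card_support hσ u)
end

section
/- Fix δ ∈ (1/e, 1). For the Hamming scheme H(tm, m) with t = −⌊log(δ) m⌋ / m on n = m^{tm} points, the maximum constituent degree satisfies k_max = (m−1)^{tm} ≤ δ n, and the motion satisfies motion(H(tm,m)) ≤ 2n/m = O(n log log n / log n). -/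
open Finset

set_option maxHeartbeats 1000000 in
/-- Fix `δ ∈ (1/e, 1)`. For the Hamming scheme `H(tm, m)` with
`t = -⌊log δ · m⌋ / m` on `n = m^{tm}` points (for all large `m`): the maximal constituent
degree is `(m-1)^{tm}` and is at most `δ n`, and the motion is at most
`2n/m = O(n log log n / log n)`. -/
theorem hamming_scheme_motion_upper (δ : ℝ) (hδ1 : 1 / Real.exp 1 < δ) (hδ2 : δ < 1) :
    ∃ C : ℝ, 0 < C ∧ ∃ M : ℕ, ∀ m : ℕ, M ≤ m →
      -- D = tm = -⌊log δ · m⌋, the diameter of the Hamming scheme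
      ∀ D : ℕ, (D : ℤ) = -(⌊Real.log δ * (m : ℝ)⌋) →
        -- (m-1)^D is the maximum constituent degree : k_max = (m-1)^{tm}
        (∀ j : ℕ, 1 ≤ j → j ≤ D → D.choose j * (m - 1) ^ j ≤ (m - 1) ^ D) ∧
        -- k_max ≤ δ n
        (((m : ℝ) - 1) ^ D ≤ δ * (m : ℝ) ^ D) ∧
        -- motion(H(tm,m)) ≤ 2n/m = O(n log log n / log n)
        (∃ σ : Equiv.Perm (Fin D → Fin m),
          (∀ x y : Fin D → Fin m, hammingDist (σ x) (σ y) = hammingDist x y) ∧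
          σ ≠ 1 ∧
          ((Finset.univ.filter fun x => σ x ≠ x).card : ℝ) ≤ 2 * (m : ℝ) ^ D / m) ∧
        2 * (m : ℝ) ^ D / m ≤
          C * (m : ℝ) ^ D * Real.log (Real.log ((m : ℝ) ^ D)) / Real.log ((m : ℝ) ^ D) := by
  have hδ0 : 0 < δ := lt_trans (by positivity) hδ1
  have hlogneg : Real.log δ < 0 := Real.log_neg hδ0 hδ2
  have hlog1 : -1 < Real.log δ := by
    have h := Real.log_lt_log (by positivity) hδ1
    rwa [one_div, Real.log_inv, Real.log_exp] at h
  set a : ℝ := -Real.log δ with ha_def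
  have ha0 : 0 < a := by simp [ha_def]; linarith
  have ha1 : a < 1 := by simp [ha_def]; linarith
  refine ⟨4, by norm_num, max (max (⌈Real.exp (-2 * Real.log a)⌉₊ + 1)
      (⌈(1 + Real.log δ)⁻¹⌉₊ + 1)) 3, ?_⟩
  intro m hM D hD
  have hm3 : 3 ≤ m := le_trans (le_max_right _ _) hM
  have hm0 : (0:ℝ) < m := by positivity
  -- log m ≥ -2 log a
  have hmexp : Real.exp (-2 * Real.log a) ≤ (m:ℝ) := by
    have h1 : ⌈Real.exp (-2 * Real.log a)⌉₊ + 1 ≤ m :=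
      le_trans (le_trans (le_max_left _ _) (le_max_left _ _)) hM
    calc Real.exp (-2 * Real.log a) ≤ (⌈Real.exp (-2 * Real.log a)⌉₊ : ℝ) := Nat.le_ceil _
      _ ≤ (m:ℝ) := by exact_mod_cast le_trans (Nat.le_succ _) h1
  have hlogm2a : -2 * Real.log a ≤ Real.log m := by
    have := Real.log_le_log (Real.exp_pos _) hmexp
    rwa [Real.log_exp] at this
  -- 1 - m < log δ * m
  have h1m : (1:ℝ) - m < Real.log δ * m := by
    have h1 : ⌈(1 + Real.log δ)⁻¹⌉₊ + 1 ≤ m :=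
      le_trans (le_trans (le_max_right _ _) (le_max_left _ _)) hM
    have h2 : (1 + Real.log δ)⁻¹ < (m:ℝ) := by
      calc (1 + Real.log δ)⁻¹ ≤ (⌈(1 + Real.log δ)⁻¹⌉₊ : ℝ) := Nat.le_ceil _
        _ < (m:ℝ) := by exact_mod_cast h1
    have hpos : 0 < 1 + Real.log δ := by linarith
    have := (inv_lt_iff_one_lt_mul₀ hpos).mp h2
    nlinarith
  -- basic facts about D
  have hDR : ((D:ℝ)) = -((⌊Real.log δ * (m:ℝ)⌋ : ℤ) : ℝ) := by exact_mod_cast congrArg (Int.cast : ℤ → ℝ) hD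
  have hDlb : a * m ≤ (D:ℝ) := by
    have := Int.floor_le (Real.log δ * (m:ℝ))
    rw [hDR]; simp [ha_def]; nlinarith
  have hD1 : 1 ≤ D := by
    by_contra h
    push_neg at h
    interval_cases D
    · simp at hDR
      nlinarith
  have hDub : D ≤ m - 1 := by
    have hfl : (1 - (m:ℤ)) ≤ ⌊Real.log δ * (m:ℝ)⌋ := by
      rw [Int.le_floor]; push_cast; linarith
    have : (D:ℤ) ≤ (m:ℤ) - 1 := by omega
    omega
  have hDm : D ≤ m := by omega
  constructor
  · -- part 1
    intro j hj1 hjD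
    calc D.choose j * (m - 1) ^ j = D.choose (D - j) * (m - 1) ^ j := by
          rw [Nat.choose_symm hjD]
      _ ≤ D ^ (D - j) * (m - 1) ^ j := Nat.mul_le_mul_right _ (Nat.choose_le_pow _ _)
      _ ≤ (m - 1) ^ (D - j) * (m - 1) ^ j := Nat.mul_le_mul_right _ (Nat.pow_le_pow_left hDub _)
      _ = (m - 1) ^ D := by rw [← pow_add, Nat.sub_add_cancel hjD]
  refine ⟨?_, ?_⟩
  · -- part 2
    have hsplit : ((m:ℝ) - 1) = (1 - 1/m) * m := by field_simp
    have h0 : (0:ℝ) ≤ 1 - 1/m := by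
      rw [sub_nonneg, div_le_one hm0]; exact_mod_cast Nat.one_le_iff_ne_zero.mpr (by omega)
    have hle : (1 - 1/(m:ℝ)) ≤ Real.exp (-(1/m)) := by
      have := Real.add_one_le_exp (-(1/(m:ℝ)))
      linarith
    have hpow : (1 - 1/(m:ℝ))^D ≤ Real.exp (-(1/m))^D := pow_le_pow_left₀ h0 hle D
    have hexp : Real.exp (-(1/(m:ℝ)))^D = Real.exp (-(D/m)) := by
      rw [← Real.exp_nat_mul]; ring_nf
    have hexp2 : Real.exp (-((D:ℝ)/m)) ≤ δ := by
      have harg : -((D:ℝ)/m) ≤ Real.log δ := by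
        rw [neg_le, ha_def] at *
        rw [le_div_iff₀ hm0]
        nlinarith
      calc Real.exp (-((D:ℝ)/m)) ≤ Real.exp (Real.log δ) := Real.exp_le_exp.mpr harg
        _ = δ := Real.exp_log hδ0
    calc ((m:ℝ) - 1)^D = (1 - 1/m)^D * (m:ℝ)^D := by rw [hsplit, mul_pow]
      _ ≤ δ * (m:ℝ)^D := by
          apply mul_le_mul_of_nonneg_right _ (by positivity)
          calc (1 - 1/(m:ℝ))^D ≤ Real.exp (-(1/m))^D := hpow
            _ = Real.exp (-((D:ℝ)/m)) := hexp
            _ ≤ δ := hexp2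
  refine ⟨?_, ?_⟩
  · -- part 3 : the permutation
    haveI : NeZero m := ⟨by omega⟩
    have h01 : (0 : Fin m) ≠ 1 := by
      have : ((1:Fin m):ℕ) = 1 % m := Fin.val_one' m
      intro h
      have := congrArg Fin.val h
      simp [Fin.val_one'] at this
      omega
    set c : Fin D := ⟨0, by omega⟩ with hc_def
    set F : ∀ _ : Fin D, Fin m ≃ Fin m :=
      fun i => if i = c then Equiv.swap 0 1 else Equiv.refl (Fin m) with hF_def
    set σ : Equiv.Perm (Fin D → Fin m) := Equiv.piCongrRight F with hσ_def
    have happ : ∀ (x : Fin D → Fin m) (i : Fin D), σ x i = F i (x i) := fun x i => rfl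
    have hmoved : ∀ x : Fin D → Fin m, σ x ≠ x ↔ (x c = 0 ∨ x c = 1) := by
      intro x
      constructor
      · intro h
        by_contra hcon
        push_neg at hcon
        apply h
        funext i
        rw [happ]
        by_cases hic : i = c
        · subst hic
          simp [hF_def, Equiv.swap_apply_of_ne_of_ne hcon.1 hcon.2]
        · simp [hF_def, hic]
      · intro h hx
        have hce := congrFun hx c
        rw [happ] at hce
        simp only [hF_def, if_pos rfl] at hce
        rcases h with h | h <;> rw [h] at hce
        · rw [Equiv.swap_apply_left] at hce
          exact h01 hce.symm
        · rw [Equiv.swap_apply_right] at hce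
          exact h01 hce
    refine ⟨σ, ?_, ?_, ?_⟩
    · intro x y
      simp only [hammingDist]
      congr 1
      apply Finset.filter_congr
      intro i _
      simp only [happ, ne_eq, (F i).injective.eq_iff]
    · intro h
      have h2 : σ (fun _ => 0) = (fun _ => (0:Fin m)) := by rw [h]; rfl
      have h3 := congrFun h2 c
      rw [happ] at h3
      simp only [hF_def, if_pos rfl, Equiv.swap_apply_left] at h3
      exact h01 h3.symm
    · -- cardinality bound
      have hinj : Set.InjOn
          (fun x : Fin D → Fin m => ((if x c = 0 then 0 else 1 : Fin 2),
            fun j : {j : Fin D // j ≠ c} => x j.1))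
          ↑(Finset.univ.filter fun x => σ x ≠ x) := by
        intro x hx x' hx' hf
        simp only [Finset.coe_filter, Set.mem_setOf_eq, Finset.mem_univ, true_and] at hx hx'
        rw [hmoved] at hx hx'
        have h1 := congrArg Prod.fst hf
        have h2 := congrArg Prod.snd hf
        simp only at h1 h2
        funext i
        by_cases hic : i = c
        · subst hic
          rcases hx with h | h <;> rcases hx' with h' | h' <;>
              simp only [h, h', if_pos rfl, if_neg (Ne.symm h01)] at h1 ⊢ <;>
            first
              | rfl
              | exact absurd h1 (by decide)
        · exact congrFun h2 ⟨i, hic⟩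
      have hcard := Finset.card_le_card_of_injOn _ (fun x _ => Finset.mem_univ _) hinj
      rw [Finset.card_univ] at hcard
      have hcardT : Fintype.card (Fin 2 × ({j : Fin D // j ≠ c} → Fin m)) = 2 * m ^ (D - 1) := by
        rw [Fintype.card_prod, Fintype.card_fun, Fintype.card_fin, Fintype.card_fin]
        congr 1
        have : Fintype.card {j : Fin D // j ≠ c} = D - 1 := by
          simp [Fintype.card_subtype_compl]
        rw [this]
      rw [hcardT] at hcard
      have hcast : ((Finset.univ.filter fun x => σ x ≠ x).card : ℝ) ≤ 2 * (m:ℝ) ^ (D - 1) := by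
        exact_mod_cast hcard
      have hpow : 2 * (m:ℝ) ^ (D-1) = 2 * (m:ℝ)^D / m := by
        rw [eq_div_iff (ne_of_gt hm0), mul_assoc, ← pow_succ]
        congr 2
        omega
      linarith
  · -- part 4 : asymptotics
    rw [Real.log_pow]
    set L : ℝ := Real.log m with hL_def
    have hL1 : 1 ≤ L := by
      rw [hL_def, ← Real.log_exp 1]
      apply Real.log_le_log (Real.exp_pos _)
      have := Real.exp_one_lt_d9
      have h3 : (3:ℝ) ≤ m := by exact_mod_cast hm3
      linarith
    have hP0 : (0:ℝ) < (m:ℝ)^D := by positivity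
    have hK0 : (0:ℝ) < (D:ℝ) * L := by
      have : (1:ℝ) ≤ D := by exact_mod_cast hD1
      nlinarith
    have hKub : (D:ℝ) * L ≤ m * L := by
      have : (D:ℝ) ≤ m := by exact_mod_cast hDm
      nlinarith
    have hloga : Real.log a + L = Real.log (a * m) := (Real.log_mul (ne_of_gt ha0) (ne_of_gt hm0)).symm
    have hKlb : a * m ≤ (D:ℝ) * L := by
      have h1 : (D:ℝ) ≤ (D:ℝ) * L := le_mul_of_one_le_right (by positivity) hL1
      linarith
    have hlogK : Real.log a + L ≤ Real.log ((D:ℝ) * L) := by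
      rw [hloga]
      exact Real.log_le_log (by positivity) hKlb
    have hhalf : L / 2 ≤ Real.log ((D:ℝ) * L) := by
      have : -2 * Real.log a ≤ L := hlogm2a
      linarith
    rw [div_le_div_iff₀ hm0 hK0]
    have hA : 2 * (m:ℝ)^D * ((D:ℝ) * L) ≤ 2 * (m:ℝ)^D * ((m:ℝ) * L) :=
      mul_le_mul_of_nonneg_left hKub (by positivity)
    have hB : 4 * ((m:ℝ)^D * (m:ℝ)) * (L / 2) ≤ 4 * ((m:ℝ)^D * (m:ℝ)) * Real.log ((D:ℝ) * L) :=
      mul_le_mul_of_nonneg_left hhalf (by positivity)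
    calc 2 * (m:ℝ)^D * ((D:ℝ) * L) ≤ 2 * (m:ℝ)^D * ((m:ℝ) * L) := hA
      _ = 4 * ((m:ℝ)^D * (m:ℝ)) * (L/2) := by ring
      _ ≤ 4 * ((m:ℝ)^D * (m:ℝ)) * Real.log ((D:ℝ) * L) := hB
      _ = 4 * (m:ℝ)^D * Real.log ((D:ℝ) * L) * m := by ring
end

section
/- Let X be a connected k-regular triangle-free graph on n ≥ 5 vertices with k ≥ 3, such that L(X) has diameter 2 and L(X) is a constituent of an association scheme of rank 4 and diameter 2 on the edge set of X, and L(X) is not strongly regular. Then every pair of distinct vertices u,v of X is distinguished (i.e., |N(u) △ N(v)| is large) by at least k ≥ n/8 vertices; in particular every nonadjacent pair of vertices lying on a 5-cycle structure has exactly k/2 common neighbors, and every σ ∈ Aut(X) ≅ Aut(L(X)) with support W moves at least |W|(k−1)/2 edges, so the motion of L(X) is at least |V(L(X))|/16. -/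
open Finset

attribute [local instance] Classical.propDecidable

set_option linter.unusedSectionVars false

section Aux

variable {V : Type*} [Fintype V] [DecidableEq V] (X : SimpleGraph V) [DecidableRel X.Adj]

lemma aux_sym2_eq {g : Sym2 V} {a b : V} (ha : a ∈ g) (hb : b ∈ g) (hab : a ≠ b) :
    g = s(a, b) :=
  (Sym2.mem_and_mem_iff hab).mp ⟨ha, hb⟩

lemma aux_card_filter_mem (a : V) :
    (Finset.univ.filter fun g : X.edgeSet => a ∈ (g : Sym2 V)).card = X.degree a := by
  rw [← SimpleGraph.card_neighborFinset_eq_degree]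
  symm
  apply Finset.card_bij (fun x hx => (⟨s(a, x), by
    rw [SimpleGraph.mem_edgeSet]
    exact (SimpleGraph.mem_neighborFinset _ _ _).mp hx⟩ : X.edgeSet))
  · intro x hx
    simp only [Finset.mem_filter, Finset.mem_univ, true_and]
    exact Sym2.mem_mk_left a x
  · intro x hx y hy hxy
    have h2 : s(a, x) = s(a, y) := congrArg Subtype.val hxy
    rw [Sym2.eq_iff] at h2
    rcases h2 with ⟨-, h⟩ | ⟨h1, h2⟩
    · exact h
    · exfalso
      have hadjy : X.Adj a y := (SimpleGraph.mem_neighborFinset _ _ _).mp hy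
      rw [← h1] at hadjy
      exact X.irrefl hadjy
  · intro g hg
    simp only [Finset.mem_filter, Finset.mem_univ, true_and] at hg
    obtain ⟨y, hy⟩ := Sym2.mem_iff_exists.mp hg
    have hadj : X.Adj a y := by
      have := g.2
      rw [hy] at this
      exact this
    refine ⟨y, (SimpleGraph.mem_neighborFinset _ _ _).mpr hadj, ?_⟩
    exact Subtype.ext hy.symm

/-- number of edges containing `a` other than `e` -/
lemma aux_card_filter_mem_ne (a : V) (e : X.edgeSet) (hae : a ∈ (e : Sym2 V)) :
    (Finset.univ.filter fun g : X.edgeSet => a ∈ (g : Sym2 V) ∧ g ≠ e).card + 1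
      = X.degree a := by
  rw [← aux_card_filter_mem X a]
  have h1 : (Finset.univ.filter fun g : X.edgeSet => a ∈ (g : Sym2 V) ∧ g ≠ e)
      = (Finset.univ.filter fun g : X.edgeSet => a ∈ (g : Sym2 V)).erase e := by
    ext g
    simp only [Finset.mem_filter, Finset.mem_univ, true_and, Finset.mem_erase]
    tauto
  rw [h1]
  exact Finset.card_erase_add_one (by simp [hae])

end Aux

section Aux2

variable {V : Type*} [Fintype V] [DecidableEq V] (X : SimpleGraph V) [DecidableRel X.Adj]

lemma aux_adj_of_edge {e : X.edgeSet} {a b : V} (he : (e : Sym2 V) = s(a, b)) :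
    X.Adj a b := by
  rw [← SimpleGraph.mem_edgeSet, ← he]
  exact e.2

lemma aux_lineDegree (k : ℕ) (hreg : X.IsRegularOfDegree k) (e : X.edgeSet) (a b : V)
    (he : (e : Sym2 V) = s(a, b)) :
    (Finset.univ.filter fun g : X.edgeSet => X.lineGraph.Adj e g).card = 2 * (k - 1) := by
  have hab : X.Adj a b := aux_adj_of_edge X he
  have hset : (Finset.univ.filter fun g : X.edgeSet => X.lineGraph.Adj e g) =
      (Finset.univ.filter fun g : X.edgeSet => a ∈ (g : Sym2 V) ∧ g ≠ e) ∪
      (Finset.univ.filter fun g : X.edgeSet => b ∈ (g : Sym2 V) ∧ g ≠ e) := by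
    ext g
    simp only [Finset.mem_filter, Finset.mem_univ, true_and, Finset.mem_union,
      SimpleGraph.lineGraph_adj_iff_exists]
    constructor
    · rintro ⟨hne, x, hxe, hxg⟩
      rw [he, Sym2.mem_iff] at hxe
      rcases hxe with rfl | rfl
      · exact Or.inl ⟨hxg, hne.symm⟩
      · exact Or.inr ⟨hxg, hne.symm⟩
    · rintro (⟨hg, hne⟩ | ⟨hg, hne⟩)
      · exact ⟨hne.symm, a, by rw [he]; exact Sym2.mem_mk_left a b, hg⟩
      · exact ⟨hne.symm, b, by rw [he]; exact Sym2.mem_mk_right a b, hg⟩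
  rw [hset, Finset.card_union_of_disjoint]
  · have h1 := aux_card_filter_mem_ne X a e (by rw [he]; exact Sym2.mem_mk_left a b)
    have h2 := aux_card_filter_mem_ne X b e (by rw [he]; exact Sym2.mem_mk_right a b)
    rw [hreg a] at h1
    rw [hreg b] at h2
    omega
  · simp only [Finset.disjoint_left, Finset.mem_filter, Finset.mem_univ, true_and]
    rintro g ⟨hga, hne⟩ ⟨hgb, -⟩
    exact hne (Subtype.ext ((aux_sym2_eq hga hgb hab.ne).trans he.symm))

lemma aux_single (x y : V) :
    (Finset.univ.filter fun g : X.edgeSet => (g : Sym2 V) = s(x, y)).card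
      = if X.Adj x y then 1 else 0 := by
  split_ifs with h
  · rw [Finset.card_eq_one]
    refine ⟨⟨s(x, y), h⟩, ?_⟩
    ext g
    simp [Subtype.ext_iff]
  · rw [Finset.card_eq_zero, Finset.eq_empty_iff_forall_notMem]
    intro g hg
    simp only [Finset.mem_filter, Finset.mem_univ, true_and] at hg
    exact h (aux_adj_of_edge X hg)

lemma aux_commonAdj (tri : ∀ ⦃x y z : V⦄, X.Adj x y → X.Adj y z → X.Adj x z → False)
    (k : ℕ) (hreg : X.IsRegularOfDegree k)
    (e f : X.edgeSet) (u w v : V) (he : (e : Sym2 V) = s(u, w)) (hf : (f : Sym2 V) = s(w, v))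
    (huv : u ≠ v) :
    (Finset.univ.filter fun g : X.edgeSet =>
      X.lineGraph.Adj e g ∧ X.lineGraph.Adj g f).card = k - 2 := by
  have huw : X.Adj u w := aux_adj_of_edge X he
  have hwv : X.Adj w v := aux_adj_of_edge X hf
  have hef : e ≠ f := by
    intro hh
    rw [hh, hf, Sym2.eq_iff] at he
    rcases he with ⟨h1, -⟩ | ⟨-, h1⟩
    · exact huw.ne h1.symm
    · exact huv h1.symm
  have hset : (Finset.univ.filter fun g : X.edgeSet =>
      X.lineGraph.Adj e g ∧ X.lineGraph.Adj g f) =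
      (Finset.univ.filter fun g : X.edgeSet => w ∈ (g : Sym2 V) ∧ g ≠ e ∧ g ≠ f) := by
    ext g
    simp only [Finset.mem_filter, Finset.mem_univ, true_and,
      SimpleGraph.lineGraph_adj_iff_exists]
    constructor
    · rintro ⟨⟨hne1, x, hxe, hxg⟩, ⟨hne2, y, hyg, hyf⟩⟩
      rw [he, Sym2.mem_iff] at hxe
      rw [hf, Sym2.mem_iff] at hyf
      rcases hxe with rfl | rfl
      · rcases hyf with rfl | rfl
        · exact ⟨hyg, hne1.symm, hne2⟩
        · exfalso
          exact tri huw hwv (aux_adj_of_edge X (aux_sym2_eq hxg hyg huv))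
      · exact ⟨hxg, hne1.symm, hne2⟩
    · rintro ⟨hw, hne, hnf⟩
      exact ⟨⟨hne.symm, w, by rw [he]; exact Sym2.mem_mk_right u w, hw⟩,
        ⟨hnf, w, hw, by rw [hf]; exact Sym2.mem_mk_left w v⟩⟩
  rw [hset]
  have h1 : (Finset.univ.filter fun g : X.edgeSet => w ∈ (g : Sym2 V) ∧ g ≠ e ∧ g ≠ f)
      = ((Finset.univ.filter fun g : X.edgeSet => w ∈ (g : Sym2 V) ∧ g ≠ e)).erase f := by
    ext g
    simp only [Finset.mem_filter, Finset.mem_univ, true_and, Finset.mem_erase]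
    tauto
  rw [h1]
  have h2 : f ∈ (Finset.univ.filter fun g : X.edgeSet => w ∈ (g : Sym2 V) ∧ g ≠ e) := by
    simp only [Finset.mem_filter, Finset.mem_univ, true_and]
    exact ⟨by rw [hf]; exact Sym2.mem_mk_left w v, hef.symm⟩
  have h3 := Finset.card_erase_add_one h2
  have h4 := aux_card_filter_mem_ne X w e (by rw [he]; exact Sym2.mem_mk_right u w)
  rw [hreg w] at h4
  omega

end Aux2

section Aux3

variable {V : Type*} [Fintype V] [DecidableEq V] (X : SimpleGraph V) [DecidableRel X.Adj]

/-- if the second coordinate of `E2` avoids both coordinates of `E1`, they differ -/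
lemma aux_ne_of_snd (E1 E2 : X.edgeSet) (x y z w : V)
    (h1 : (E1 : Sym2 V) = s(x, y)) (h2 : (E2 : Sym2 V) = s(z, w))
    (hx : w ≠ x) (hy : w ≠ y) : E1 ≠ E2 := by
  intro hh
  rw [hh, h2] at h1
  rw [Sym2.eq_iff] at h1
  rcases h1 with ⟨-, h⟩ | ⟨-, h⟩
  · exact hy h
  · exact hx h

/-- if the first coordinate of `E2` avoids both coordinates of `E1`, they differ -/
lemma aux_ne_of_fst (E1 E2 : X.edgeSet) (x y z w : V)
    (h1 : (E1 : Sym2 V) = s(x, y)) (h2 : (E2 : Sym2 V) = s(z, w))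
    (hx : z ≠ x) (hy : z ≠ y) : E1 ≠ E2 := by
  intro hh
  rw [hh, h2] at h1
  rw [Sym2.eq_iff] at h1
  rcases h1 with ⟨h, -⟩ | ⟨h, -⟩
  · exact hx h
  · exact hy h

lemma aux_commonDisj (e f : X.edgeSet) (a b c' d' : V)
    (he : (e : Sym2 V) = s(a, b)) (hf : (f : Sym2 V) = s(c', d'))
    (hac : a ≠ c') (had : a ≠ d') (hbc : b ≠ c') (hbd : b ≠ d') :
    (Finset.univ.filter fun g : X.edgeSet =>
        X.lineGraph.Adj e g ∧ X.lineGraph.Adj g f).card =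
      (((if X.Adj a c' then 1 else 0) + (if X.Adj a d' then 1 else 0)) +
        (if X.Adj b c' then 1 else 0)) + (if X.Adj b d' then 1 else 0) := by
  have hab : X.Adj a b := aux_adj_of_edge X he
  have hcd : X.Adj c' d' := aux_adj_of_edge X hf
  set F1 := (Finset.univ.filter fun g : X.edgeSet => (g : Sym2 V) = s(a, c')) with hF1
  set F2 := (Finset.univ.filter fun g : X.edgeSet => (g : Sym2 V) = s(a, d')) with hF2
  set F3 := (Finset.univ.filter fun g : X.edgeSet => (g : Sym2 V) = s(b, c')) with hF3
  set F4 := (Finset.univ.filter fun g : X.edgeSet => (g : Sym2 V) = s(b, d')) with hF4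
  have hset : (Finset.univ.filter fun g : X.edgeSet =>
      X.lineGraph.Adj e g ∧ X.lineGraph.Adj g f) = ((F1 ∪ F2) ∪ F3) ∪ F4 := by
    ext g
    simp only [hF1, hF2, hF3, hF4, Finset.mem_filter, Finset.mem_univ, true_and,
      Finset.mem_union, SimpleGraph.lineGraph_adj_iff_exists]
    constructor
    · rintro ⟨⟨hne1, x, hxe, hxg⟩, ⟨hne2, y, hyg, hyf⟩⟩
      rw [he, Sym2.mem_iff] at hxe
      rw [hf, Sym2.mem_iff] at hyf
      rcases hxe with rfl | rfl <;> rcases hyf with rfl | rfl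
      · exact Or.inl (Or.inl (Or.inl (aux_sym2_eq hxg hyg hac)))
      · exact Or.inl (Or.inl (Or.inr (aux_sym2_eq hxg hyg had)))
      · exact Or.inl (Or.inr (aux_sym2_eq hxg hyg hbc))
      · exact Or.inr (aux_sym2_eq hxg hyg hbd)
    · have hmk : ∀ (x y : V), (g : Sym2 V) = s(x, y) →
          x ∈ (e : Sym2 V) → y ∈ (f : Sym2 V) → e ≠ g → g ≠ f →
          (e ≠ g ∧ ∃ v, v ∈ (e : Sym2 V) ∧ v ∈ (g : Sym2 V)) ∧
          (g ≠ f ∧ ∃ v, v ∈ (g : Sym2 V) ∧ v ∈ (f : Sym2 V)) := by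
        rintro x y hg hxe hyf hne1 hne2
        exact ⟨⟨hne1, x, hxe, by rw [hg]; exact Sym2.mem_mk_left x y⟩,
          ⟨hne2, y, by rw [hg]; exact Sym2.mem_mk_right x y, hyf⟩⟩
      rintro (((hg | hg) | hg) | hg)
      · exact hmk a c' hg (by rw [he]; exact Sym2.mem_mk_left a b)
          (by rw [hf]; exact Sym2.mem_mk_left c' d')
          (aux_ne_of_snd X e g a b a c' he hg hac.symm hbc.symm)
          (aux_ne_of_snd X g f a c' c' d' hg hf had.symm hcd.ne.symm)
      · exact hmk a d' hg (by rw [he]; exact Sym2.mem_mk_left a b)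
          (by rw [hf]; exact Sym2.mem_mk_right c' d')
          (aux_ne_of_snd X e g a b a d' he hg had.symm hbd.symm)
          (aux_ne_of_fst X g f a d' c' d' hg hf hac.symm hcd.ne)
      · exact hmk b c' hg (by rw [he]; exact Sym2.mem_mk_right a b)
          (by rw [hf]; exact Sym2.mem_mk_left c' d')
          (aux_ne_of_snd X e g a b b c' he hg hac.symm hbc.symm)
          (aux_ne_of_snd X g f b c' c' d' hg hf hbd.symm hcd.ne.symm)
      · exact hmk b d' hg (by rw [he]; exact Sym2.mem_mk_right a b)
          (by rw [hf]; exact Sym2.mem_mk_right c' d')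
          (aux_ne_of_snd X e g a b b d' he hg had.symm hbd.symm)
          (aux_ne_of_fst X g f b d' c' d' hg hf hbc.symm hcd.ne)
  have dis : ∀ (x y z w : V), s(x, y) ≠ s(z, w) →
      Disjoint (Finset.univ.filter fun g : X.edgeSet => (g : Sym2 V) = s(x, y))
        (Finset.univ.filter fun g : X.edgeSet => (g : Sym2 V) = s(z, w)) := by
    intro x y z w hne
    simp only [Finset.disjoint_left, Finset.mem_filter, Finset.mem_univ, true_and]
    intro g h1 h2
    exact hne (h1.symm.trans h2)
  have d12 : s(a, c') ≠ s(a, d') := by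
    intro h; rw [Sym2.eq_iff] at h
    rcases h with ⟨-, h⟩ | ⟨h, -⟩; exacts [hcd.ne h, had h]
  have d13 : s(a, c') ≠ s(b, c') := by
    intro h; rw [Sym2.eq_iff] at h
    rcases h with ⟨h, -⟩ | ⟨h, -⟩; exacts [hab.ne h, hac h]
  have d14 : s(a, c') ≠ s(b, d') := by
    intro h; rw [Sym2.eq_iff] at h
    rcases h with ⟨h, -⟩ | ⟨h, -⟩; exacts [hab.ne h, had h]
  have d23 : s(a, d') ≠ s(b, c') := by
    intro h; rw [Sym2.eq_iff] at h
    rcases h with ⟨h, -⟩ | ⟨h, -⟩; exacts [hab.ne h, hac h]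
  have d24 : s(a, d') ≠ s(b, d') := by
    intro h; rw [Sym2.eq_iff] at h
    rcases h with ⟨h, -⟩ | ⟨h, -⟩; exacts [hab.ne h, had h]
  have d34 : s(b, c') ≠ s(b, d') := by
    intro h; rw [Sym2.eq_iff] at h
    rcases h with ⟨-, h⟩ | ⟨h, -⟩; exacts [hcd.ne h, hbd h]
  rw [hset, Finset.card_union_of_disjoint, Finset.card_union_of_disjoint,
    Finset.card_union_of_disjoint, hF1, hF2, hF3, hF4, aux_single, aux_single,
    aux_single, aux_single]
  · exact dis _ _ _ _ d12
  · rw [hF1, hF2, hF3, Finset.disjoint_union_left]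
    exact ⟨dis _ _ _ _ d13, dis _ _ _ _ d23⟩
  · rw [hF1, hF2, hF3, hF4, Finset.disjoint_union_left, Finset.disjoint_union_left]
    exact ⟨⟨dis _ _ _ _ d14, dis _ _ _ _ d24⟩, dis _ _ _ _ d34⟩

end Aux3
/-- Let `X` be a connected `k`-regular triangle-free graph on `n ≥ 5`
vertices, `k ≥ 3`, such that `L(X)` is a constituent of an association scheme of rank 4
and diameter 2 on `E(X)`, and `L(X)` is not strongly regular. Then every pair of distinct
vertices of `X` is distinguished by at least `k ≥ n/8` vertices, every pair of vertices at
distance 2 has exactly `k/2` common neighbors, and every nontrivial `σ ∈ Aut(X) ≅ Aut(L(X))`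
with support `W` moves at least `|W|(k−1)/2` edges; hence the motion of `L(X)` is at least
`|V(L(X))|/16`. -/
theorem lineGraph_constituent_motion {V : Type*} [Fintype V] [DecidableEq V]
    (X : SimpleGraph V) [DecidableRel X.Adj] (k : ℕ)
    (hn : 5 ≤ Fintype.card V) (hk : 3 ≤ k)
    (hconn : X.Connected) (hreg : X.IsRegularOfDegree k)
    (htrifree : X.CliqueFree 3)
    (c : X.edgeSet → X.edgeSet → Fin 4)
    (hsymm : ∀ e f, c e f = c f e)
    (hdiag : ∀ e, c e e = 0)
    (hoff : ∀ e f, e ≠ f → c e f ≠ 0)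
    (p : Fin 4 → Fin 4 → Fin 4 → ℕ)
    (hcoh : ∀ (i j t : Fin 4) (e f : X.edgeSet), c e f = t →
      (Finset.univ.filter fun g => c e g = i ∧ c g f = j).card = p i j t)
    (kk : Fin 4 → ℕ)
    (hkk : ∀ (i : Fin 4) (e : X.edgeSet),
      (Finset.univ.filter fun f => c e f = i).card = kk i)
    (hdiam : ∀ i : Fin 4, i ≠ 0 → ∀ e f : X.edgeSet, e ≠ f →
      c e f = i ∨ ∃ g, c e g = i ∧ c g f = i)
    (hline : ∀ e f : X.edgeSet, e ≠ f → (c e f = 1 ↔ X.lineGraph.Adj e f))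
    (hnotsrg : ¬ ∃ ℓ μ : ℕ,
      X.lineGraph.IsSRGWith (Fintype.card X.edgeSet) (2 * (k - 1)) ℓ μ) :
    -- every pair of distinct vertices is distinguished by ≥ k ≥ n/8 vertices
    (∀ u v : V, u ≠ v →
      k ≤ (Finset.univ.filter fun w =>
        (X.Adj u w ∧ ¬ X.Adj v w) ∨ (X.Adj v w ∧ ¬ X.Adj u w)).card) ∧
    ((Fintype.card V : ℝ) / 8 ≤ (k : ℝ)) ∧
    -- every pair at distance 2 has exactly k/2 common neighbors
    (∀ u v : V, X.dist u v = 2 →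
      2 * (Finset.univ.filter fun w => X.Adj u w ∧ X.Adj v w).card = k) ∧
    -- every nontrivial automorphism moves ≥ |supp|(k-1)/2 edges, at least |E|/16
    (∀ σ : Equiv.Perm V, (∀ a b : V, X.Adj (σ a) (σ b) ↔ X.Adj a b) → σ ≠ 1 →
      (Finset.univ.filter fun x => σ x ≠ x).card * (k - 1) ≤
        2 * (X.edgeFinset.filter fun e => Sym2.map σ e ≠ e).card ∧
      X.edgeFinset.card ≤
        16 * (X.edgeFinset.filter fun e => Sym2.map σ e ≠ e).card) := by
  -- triangle-freeness in convenient form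
  have tri : ∀ ⦃x y z : V⦄, X.Adj x y → X.Adj y z → X.Adj x z → False := by
    intro x y z h1 h2 h3
    exact htrifree {x, y, z} (SimpleGraph.is3Clique_triple_iff.mpr ⟨h1, h3, h2⟩)
  have decomp : ∀ e : X.edgeSet, ∃ a b : V, (e : Sym2 V) = s(a, b) :=
    fun e => @Sym2.ind V (fun z => ∃ a b : V, z = s(a, b)) (fun a b => ⟨a, b, rfl⟩) e
  have hc1 : ∀ e g : X.edgeSet, c e g = 1 ↔ X.lineGraph.Adj e g := by
    intro e g
    by_cases h : e = g
    · subst h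
      rw [hdiag e]
      exact iff_of_false (by decide) (X.lineGraph.irrefl)
    · exact hline e g h
  have cc_eq_p : ∀ e f : X.edgeSet,
      (Finset.univ.filter fun g : X.edgeSet =>
        X.lineGraph.Adj e g ∧ X.lineGraph.Adj g f).card = p 1 1 (c e f) := by
    intro e f
    rw [← hcoh 1 1 (c e f) e f rfl]
    congr 1
    ext g
    simp only [Finset.mem_filter, Finset.mem_univ, true_and]
    rw [hc1 e g, hc1 g f]
  have cc_pos : ∀ e f : X.edgeSet, e ≠ f → ¬X.lineGraph.Adj e f →
      1 ≤ (Finset.univ.filter fun g : X.edgeSet =>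
        X.lineGraph.Adj e g ∧ X.lineGraph.Adj g f).card := by
    intro e f hne hna
    rcases hdiam 1 (by decide) e f hne with h | ⟨g, h1, h2⟩
    · exact absurd ((hc1 e f).mp h) hna
    · exact Finset.card_pos.mpr
        ⟨g, Finset.mem_filter.mpr ⟨Finset.mem_univ g, (hc1 e g).mp h1, (hc1 g f).mp h2⟩⟩
  have hdegfilter : ∀ v : V, (Finset.univ.filter fun t => X.Adj v t).card = k := by
    intro v
    rw [← hreg v, ← SimpleGraph.card_neighborFinset_eq_degree]
    congr 1
    ext t
    simp [SimpleGraph.mem_neighborFinset]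
  have common_card : ∀ e f : X.edgeSet,
      Fintype.card (X.lineGraph.commonNeighbors e f) =
        (Finset.univ.filter fun g : X.edgeSet =>
          X.lineGraph.Adj e g ∧ X.lineGraph.Adj g f).card := by
    intro e f
    rw [← Set.toFinset_card]
    congr 1
    ext g
    rw [Set.mem_toFinset, SimpleGraph.mem_commonNeighbors, Finset.mem_filter]
    constructor
    · rintro ⟨h1, h2⟩; exact ⟨Finset.mem_univ g, h1, h2.symm⟩
    · rintro ⟨-, h1, h2⟩; exact ⟨h1, h2.symm⟩
  have lineDeg : X.lineGraph.IsRegularOfDegree (2 * (k - 1)) := by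
    intro e
    obtain ⟨a, b, he⟩ := decomp e
    rw [← SimpleGraph.card_neighborFinset_eq_degree]
    have hnb : X.lineGraph.neighborFinset e
        = Finset.univ.filter fun g => X.lineGraph.Adj e g := by
      ext g
      simp [SimpleGraph.mem_neighborFinset]
    rw [hnb, aux_lineDegree X k hreg e a b he]
  have mkSRG : ∀ μ0 : ℕ,
      (∀ e f : X.edgeSet, e ≠ f → ¬X.lineGraph.Adj e f →
        (Finset.univ.filter fun g : X.edgeSet =>
          X.lineGraph.Adj e g ∧ X.lineGraph.Adj g f).card = μ0) → False := by
    intro μ0 hμ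
    refine hnotsrg ⟨k - 2, μ0, rfl, lineDeg, ?_, ?_⟩
    · intro e f hadj
      rw [common_card]
      have hadj' := hadj
      rw [SimpleGraph.lineGraph_adj_iff_exists] at hadj'
      obtain ⟨hne, w, hwe, hwf⟩ := hadj'
      obtain ⟨u, hu⟩ := Sym2.mem_iff_exists.mp hwe
      obtain ⟨v, hv⟩ := Sym2.mem_iff_exists.mp hwf
      have he : (e : Sym2 V) = s(u, w) := hu.trans (Sym2.eq_swap)
      have huv : u ≠ v := by
        intro h
        apply hne
        apply Subtype.ext
        rw [hu, hv, h]
      exact aux_commonAdj X tri k hreg e f u w v he hv huv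
    · intro e f hne hna
      rw [common_card]
      exact hμ e f hne hna
  -- the number of common line-graph neighbours of two nonadjacent edges is 1 or 2
  have cc12 : ∀ e f : X.edgeSet, e ≠ f → ¬X.lineGraph.Adj e f →
      (Finset.univ.filter fun g : X.edgeSet =>
        X.lineGraph.Adj e g ∧ X.lineGraph.Adj g f).card = 1 ∨
      (Finset.univ.filter fun g : X.edgeSet =>
        X.lineGraph.Adj e g ∧ X.lineGraph.Adj g f).card = 2 := by
    intro e f hne hna
    obtain ⟨a, b, he⟩ := decomp e
    obtain ⟨c', d', hf⟩ := decomp f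
    have hab := aux_adj_of_edge X he
    have hcd := aux_adj_of_edge X hf
    have hdisj : ∀ x : V, x ∈ (e : Sym2 V) → x ∈ (f : Sym2 V) → False := by
      intro x h1 h2
      exact hna (SimpleGraph.lineGraph_adj_iff_exists.mpr ⟨hne, x, h1, h2⟩)
    have hac : a ≠ c' := fun h => hdisj a (by rw [he]; exact Sym2.mem_mk_left a b)
      (by rw [hf, h]; exact Sym2.mem_mk_left c' d')
    have had : a ≠ d' := fun h => hdisj a (by rw [he]; exact Sym2.mem_mk_left a b)
      (by rw [hf, h]; exact Sym2.mem_mk_right c' d')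
    have hbc : b ≠ c' := fun h => hdisj b (by rw [he]; exact Sym2.mem_mk_right a b)
      (by rw [hf, h]; exact Sym2.mem_mk_left c' d')
    have hbd : b ≠ d' := fun h => hdisj b (by rw [he]; exact Sym2.mem_mk_right a b)
      (by rw [hf, h]; exact Sym2.mem_mk_right c' d')
    have hcard := aux_commonDisj X e f a b c' d' he hf hac had hbc hbd
    have hpos := cc_pos e f hne hna
    have h1 : ¬(X.Adj a c' ∧ X.Adj a d') := fun ⟨hp, hq⟩ => tri hp hcd hq
    have h2 : ¬(X.Adj b c' ∧ X.Adj b d') := fun ⟨hp, hq⟩ => tri hp hcd hq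
    split_ifs at hcard <;>
      first
        | (exact absurd ⟨‹X.Adj a c'›, ‹X.Adj a d'›⟩ h1)
        | (exact absurd ⟨‹X.Adj b c'›, ‹X.Adj b d'›⟩ h2)
        | omega
  -- obtain the two colours of nonadjacent pairs
  obtain ⟨e1, f1, hne1, hna1, hv1⟩ :
      ∃ e f : X.edgeSet, e ≠ f ∧ ¬X.lineGraph.Adj e f ∧
        (Finset.univ.filter fun g : X.edgeSet =>
          X.lineGraph.Adj e g ∧ X.lineGraph.Adj g f).card = 1 := by
    by_contra hcon
    push_neg at hcon
    exact mkSRG 2 fun e f hne hna =>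
      (cc12 e f hne hna).resolve_left (hcon e f hne hna)
  obtain ⟨e2, f2, hne2, hna2, hv2⟩ :
      ∃ e f : X.edgeSet, e ≠ f ∧ ¬X.lineGraph.Adj e f ∧
        (Finset.univ.filter fun g : X.edgeSet =>
          X.lineGraph.Adj e g ∧ X.lineGraph.Adj g f).card = 2 := by
    by_contra hcon
    push_neg at hcon
    exact mkSRG 1 fun e f hne hna =>
      (cc12 e f hne hna).resolve_right (hcon e f hne hna)
  have hp1 : p 1 1 (c e1 f1) = 1 := (cc_eq_p e1 f1).symm.trans hv1
  have hp2 : p 1 1 (c e2 f2) = 2 := (cc_eq_p e2 f2).symm.trans hv2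
  set t1 := c e1 f1 with ht1def
  set t2 := c e2 f2 with ht2def
  have ht1ne0 : t1 ≠ 0 := hoff e1 f1 hne1
  have ht1ne1 : t1 ≠ 1 := fun h => hna1 ((hc1 e1 f1).mp h)
  have ht2ne0 : t2 ≠ 0 := hoff e2 f2 hne2
  have ht2ne1 : t2 ≠ 1 := fun h => hna2 ((hc1 e2 f2).mp h)
  have ht12 : t1 ≠ t2 := by
    intro h
    rw [h] at hp1
    rw [hp1] at hp2
    exact absurd hp2 (by decide)
  have h23 : ∀ i : Fin 4, i ≠ 0 → i ≠ 1 → i = 2 ∨ i = 3 := by decide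
  have hcolor : ∀ e f : X.edgeSet, e ≠ f → ¬X.lineGraph.Adj e f →
      c e f = t1 ∨ c e f = t2 := by
    intro e f hne hna
    have h := h23 (c e f) (hoff e f hne) (fun h => hna ((hc1 e f).mp h))
    have ha := h23 t1 ht1ne0 ht1ne1
    have hb := h23 t2 ht2ne0 ht2ne1
    rcases ha with ha | ha <;> rcases hb with hb | hb <;> rcases h with h | h <;>
      first
        | (exact absurd (ha.trans hb.symm) ht12)
        | (exact Or.inl (h.trans ha.symm))
        | (exact Or.inr (h.trans hb.symm))
  have hcol2 : ∀ e f : X.edgeSet, e ≠ f → ¬X.lineGraph.Adj e f →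
      (c e f = t2 ↔ (Finset.univ.filter fun g : X.edgeSet =>
        X.lineGraph.Adj e g ∧ X.lineGraph.Adj g f).card = 2) := by
    intro e f hne hna
    constructor
    · intro h
      rw [cc_eq_p e f, h]
      exact hp2
    · intro h
      rcases hcolor e f hne hna with hh | hh
      · exfalso
        rw [cc_eq_p e f, hh, hp1] at h
        exact absurd h (by decide)
      · exact hh
  -- F1 : every path u-w-v gives exactly  p 1 t2 1 + 1  common neighbours of u and v
  have F1 : ∀ u w v : V, X.Adj u w → X.Adj w v → u ≠ v →
      (Finset.univ.filter fun x => X.Adj u x ∧ X.Adj v x).card = p 1 t2 1 + 1 := by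
    intro u w v huw hwv huv
    have hnuv : ¬X.Adj u v := fun h => tri huw hwv h
    set e : X.edgeSet := ⟨s(u, w), X.mem_edgeSet.mpr huw⟩ with hedef
    set f : X.edgeSet := ⟨s(w, v), X.mem_edgeSet.mpr hwv⟩ with hfdef
    have he : (e : Sym2 V) = s(u, w) := rfl
    have hf : (f : Sym2 V) = s(w, v) := rfl
    have hef : e ≠ f := aux_ne_of_snd X e f u w w v he hf huv.symm hwv.ne.symm
    have hcef : c e f = 1 := (hc1 e f).mpr (SimpleGraph.lineGraph_adj_iff_exists.mpr
      ⟨hef, w, by rw [he]; exact Sym2.mem_mk_right u w,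
        by rw [hf]; exact Sym2.mem_mk_left w v⟩)
    have hcount := hcoh 1 t2 1 e f hcef
    have hbij : (Finset.univ.filter fun x => X.Adj u x ∧ X.Adj v x ∧ x ≠ w).card
        = (Finset.univ.filter fun g : X.edgeSet => c e g = 1 ∧ c g f = t2).card := by
      apply Finset.card_bij (fun x hx =>
        (⟨s(u, x), X.mem_edgeSet.mpr (Finset.mem_filter.mp hx).2.1⟩ : X.edgeSet))
      · intro x hx
        obtain ⟨-, hux, hvx, hxw⟩ := Finset.mem_filter.mp hx
        set g : X.edgeSet := ⟨s(u, x), X.mem_edgeSet.mpr hux⟩ with hgdef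
        have hg : (g : Sym2 V) = s(u, x) := rfl
        refine Finset.mem_filter.mpr ⟨Finset.mem_univ _, ?_, ?_⟩
        · apply (hc1 e g).mpr
          apply SimpleGraph.lineGraph_adj_iff_exists.mpr
          exact ⟨aux_ne_of_snd X e g u w u x he hg (fun h => X.irrefl (h ▸ hux)) hxw,
            u, by rw [he]; exact Sym2.mem_mk_left u w,
            by rw [hg]; exact Sym2.mem_mk_left u x⟩
        · have hgf : g ≠ f := aux_ne_of_fst X g f u x w v hg hf huw.ne.symm hxw.symm
          have hgnadj : ¬X.lineGraph.Adj g f := by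
            rw [SimpleGraph.lineGraph_adj_iff_exists]
            rintro ⟨-, q, hqg, hqf⟩
            rw [hg, Sym2.mem_iff] at hqg
            rw [hf, Sym2.mem_iff] at hqf
            rcases hqg with rfl | rfl <;> rcases hqf with h | h
            · exact huw.ne h
            · exact huv h
            · exact hxw h
            · exact hvx.ne h.symm
          apply (hcol2 g f hgf hgnadj).mpr
          have heval := aux_commonDisj X g f u x w v hg hf huw.ne huv hxw hvx.ne.symm
          rw [if_pos huw, if_neg hnuv, if_neg (fun h => tri hux h huw),
            if_pos hvx.symm] at heval
          exact heval
      · intro x hx y hy hxy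
        have hsym : s(u, x) = s(u, y) := congrArg Subtype.val hxy
        rw [Sym2.eq_iff] at hsym
        rcases hsym with ⟨-, h⟩ | ⟨h1, h2⟩
        · exact h
        · exfalso
          have := (Finset.mem_filter.mp hx).2.1
          rw [h2] at this
          exact X.irrefl this
      · intro g hg
        obtain ⟨-, hceg, hcgf⟩ := Finset.mem_filter.mp hg
        have hgf_ne : g ≠ f := by
          intro h
          rw [h, hdiag] at hcgf
          exact ht2ne0 hcgf.symm
        have hadj_eg := (hc1 e g).mp hceg
        rw [SimpleGraph.lineGraph_adj_iff_exists] at hadj_eg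
        obtain ⟨hne_eg, y, hye, hyg⟩ := hadj_eg
        rw [he, Sym2.mem_iff] at hye
        have hgnadj : ¬X.lineGraph.Adj g f :=
          fun h => ht2ne1 (hcgf.symm.trans ((hc1 g f).mpr h))
        rcases hye with hyu | hyw
        case inl =>
          -- the shared vertex is u
          obtain ⟨x, hgx⟩ := Sym2.mem_iff_exists.mp hyg
          rw [hyu] at hgx
          have hux : X.Adj u x := aux_adj_of_edge X hgx
          have hdisjgf : ∀ z, z ∈ (g : Sym2 V) → z ∈ (f : Sym2 V) → False :=
            fun z hz1 hz2 => hgnadj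
              (SimpleGraph.lineGraph_adj_iff_exists.mpr ⟨hgf_ne, z, hz1, hz2⟩)
          have hx_w : x ≠ w := fun h => hdisjgf x
            (by rw [hgx]; exact Sym2.mem_mk_right u x)
            (by rw [hf, h]; exact Sym2.mem_mk_left w v)
          have hx_v : x ≠ v := fun h => hdisjgf x
            (by rw [hgx]; exact Sym2.mem_mk_right u x)
            (by rw [hf, h]; exact Sym2.mem_mk_right w v)
          have hcc2 := (hcol2 g f hgf_ne hgnadj).mp hcgf
          have heval := aux_commonDisj X g f u x w v hgx hf huw.ne huv hx_w hx_v
          rw [heval] at hcc2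
          rw [if_pos huw, if_neg hnuv, if_neg (fun h => tri hux h huw)] at hcc2
          by_cases hxv : X.Adj x v
          · exact ⟨x, Finset.mem_filter.mpr
              ⟨Finset.mem_univ x, hux, hxv.symm, hx_w⟩, Subtype.ext hgx.symm⟩
          · rw [if_neg hxv] at hcc2
            exact absurd hcc2 (by norm_num)
        case inr =>
          rw [hyw] at hyg
          exfalso
          apply hgnadj
          exact SimpleGraph.lineGraph_adj_iff_exists.mpr
            ⟨hgf_ne, w, hyg, by rw [hf]; exact Sym2.mem_mk_left w v⟩
    have hrel : (Finset.univ.filter fun x => X.Adj u x ∧ X.Adj v x ∧ x ≠ w)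
        = (Finset.univ.filter fun x => X.Adj u x ∧ X.Adj v x).erase w := by
      ext x
      simp only [Finset.mem_filter, Finset.mem_univ, true_and, Finset.mem_erase]
      tauto
    have hwmem : w ∈ (Finset.univ.filter fun x => X.Adj u x ∧ X.Adj v x) :=
      Finset.mem_filter.mpr ⟨Finset.mem_univ w, huw, hwv.symm⟩
    have herase := Finset.card_erase_add_one hwmem
    have h3 := hbij.trans hcount
    rw [hrel] at h3
    omega
  -- F2 : for a path w-x-y-z with w,z nonadjacent, μ(w,z) + m = k
  have F2 : ∀ w x y z : V, X.Adj w x → X.Adj x y → X.Adj y z → ¬X.Adj w z → w ≠ z →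
      (Finset.univ.filter fun t => X.Adj w t ∧ X.Adj z t).card + (p 1 t2 1 + 1) = k := by
    intro w x y z hwx hxy hyz hwz hwzne
    have hnwy : ¬X.Adj w y := fun h => tri hwx hxy h
    have hwyne : w ≠ y := fun h => hwz (h ▸ hyz)
    have hnxz : ¬X.Adj x z := fun h => tri hxy hyz h
    have hxzne : x ≠ z := fun h => hwz (h ▸ hwx)
    have dich : ∀ t : V, X.Adj w t → t ≠ x → (X.Adj y t ↔ ¬X.Adj z t) := by
      intro t hwt htx
      constructor
      · intro hyt hzt
        exact tri hyt hzt.symm hyz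
      · intro hnzt
        by_contra hnyt
        have hty : t ≠ y := fun h => hnwy (h ▸ hwt)
        have htz : t ≠ z := fun h => hwz (h ▸ hwt)
        have g : X.edgeSet := ⟨s(w, t), X.mem_edgeSet.mpr hwt⟩
        have hg : ((⟨s(w, t), X.mem_edgeSet.mpr hwt⟩ : X.edgeSet) : Sym2 V)
            = s(w, t) := rfl
        have hfe : ((⟨s(y, z), X.mem_edgeSet.mpr hyz⟩ : X.edgeSet) : Sym2 V)
            = s(y, z) := rfl
        have hgf : (⟨s(w, t), X.mem_edgeSet.mpr hwt⟩ : X.edgeSet)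
            ≠ ⟨s(y, z), X.mem_edgeSet.mpr hyz⟩ :=
          aux_ne_of_fst X _ _ w t y z hg hfe hwyne.symm hty.symm
        have hnadj : ¬X.lineGraph.Adj ⟨s(w, t), X.mem_edgeSet.mpr hwt⟩
            ⟨s(y, z), X.mem_edgeSet.mpr hyz⟩ := by
          rw [SimpleGraph.lineGraph_adj_iff_exists]
          rintro ⟨-, q, hqg, hqf⟩
          rw [hg, Sym2.mem_iff] at hqg
          rw [hfe, Sym2.mem_iff] at hqf
          rcases hqg with rfl | rfl <;> rcases hqf with h | h
          · exact hwyne h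
          · exact hwzne h
          · exact hty h
          · exact htz h
        have hpos := cc_pos _ _ hgf hnadj
        have heval := aux_commonDisj X _ _ w t y z hg hfe hwyne hwzne hty htz
        rw [if_neg hnwy, if_neg hwz, if_neg (fun h : X.Adj t y => hnyt h.symm),
          if_neg (fun h : X.Adj t z => hnzt h.symm)] at heval
        omega
    -- partition of the neighbours of w other than x
    have hSrel : (Finset.univ.filter fun t => X.Adj w t ∧ t ≠ x)
        = (Finset.univ.filter fun t => X.Adj w t).erase x := by
      ext t
      simp only [Finset.mem_filter, Finset.mem_univ, true_and, Finset.mem_erase]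
      tauto
    have hxmem : x ∈ (Finset.univ.filter fun t => X.Adj w t) :=
      Finset.mem_filter.mpr ⟨Finset.mem_univ x, hwx⟩
    have hScard : (Finset.univ.filter fun t => X.Adj w t ∧ t ≠ x).card + 1 = k := by
      rw [hSrel, Finset.card_erase_add_one hxmem, hdegfilter w]
    have hsplit : (Finset.univ.filter fun t => X.Adj w t ∧ t ≠ x)
        = (Finset.univ.filter fun t => X.Adj w t ∧ t ≠ x ∧ X.Adj y t)
          ∪ (Finset.univ.filter fun t => X.Adj w t ∧ t ≠ x ∧ X.Adj z t) := by
      ext t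
      simp only [Finset.mem_filter, Finset.mem_univ, true_and, Finset.mem_union]
      constructor
      · rintro ⟨hwt, htx⟩
        by_cases hzt : X.Adj z t
        · exact Or.inr ⟨hwt, htx, hzt⟩
        · exact Or.inl ⟨hwt, htx, (dich t hwt htx).mpr hzt⟩
      · rintro (⟨hwt, htx, -⟩ | ⟨hwt, htx, -⟩) <;> exact ⟨hwt, htx⟩
    have hdisj : Disjoint (Finset.univ.filter fun t => X.Adj w t ∧ t ≠ x ∧ X.Adj y t)
        (Finset.univ.filter fun t => X.Adj w t ∧ t ≠ x ∧ X.Adj z t) := by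
      simp only [Finset.disjoint_left, Finset.mem_filter, Finset.mem_univ, true_and]
      rintro t ⟨hwt, htx, hyt⟩ ⟨-, -, hzt⟩
      exact (dich t hwt htx).mp hyt hzt
    have hSyrel : (Finset.univ.filter fun t => X.Adj w t ∧ t ≠ x ∧ X.Adj y t)
        = (Finset.univ.filter fun t => X.Adj w t ∧ X.Adj y t).erase x := by
      ext t
      simp only [Finset.mem_filter, Finset.mem_univ, true_and, Finset.mem_erase]
      tauto
    have hxmem2 : x ∈ (Finset.univ.filter fun t => X.Adj w t ∧ X.Adj y t) :=
      Finset.mem_filter.mpr ⟨Finset.mem_univ x, hwx, hxy.symm⟩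
    have hSycard : (Finset.univ.filter fun t => X.Adj w t ∧ t ≠ x ∧ X.Adj y t).card + 1
        = p 1 t2 1 + 1 := by
      rw [hSyrel, Finset.card_erase_add_one hxmem2]
      exact F1 w x y hwx hxy hwyne
    have hSzrel : (Finset.univ.filter fun t => X.Adj w t ∧ t ≠ x ∧ X.Adj z t)
        = (Finset.univ.filter fun t => X.Adj w t ∧ X.Adj z t) := by
      ext t
      simp only [Finset.mem_filter, Finset.mem_univ, true_and]
      constructor
      · rintro ⟨hwt, -, hzt⟩
        exact ⟨hwt, hzt⟩
      · rintro ⟨hwt, hzt⟩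
        exact ⟨hwt, fun h => hnxz (h ▸ hzt).symm, hzt⟩
    have hcards : (Finset.univ.filter fun t => X.Adj w t ∧ t ≠ x).card
        = (Finset.univ.filter fun t => X.Adj w t ∧ t ≠ x ∧ X.Adj y t).card
          + (Finset.univ.filter fun t => X.Adj w t ∧ t ≠ x ∧ X.Adj z t).card := by
      rw [hsplit, Finset.card_union_of_disjoint hdisj]
    rw [hSzrel] at hcards
    omega
  -- step : any path a-b-c'-d' with a,d' nonadjacent forces 2m = k
  have step : ∀ a b c' d' : V, X.Adj a b → X.Adj b c' → X.Adj c' d' →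
      ¬X.Adj a d' → a ≠ d' → (p 1 t2 1 + 1) + (p 1 t2 1 + 1) = k := by
    intro a b c' d' hab hbc hcd hnad hnadne
    have h2 := F2 a b c' d' hab hbc hcd hnad hnadne
    by_cases hpos : 0 < (Finset.univ.filter fun t => X.Adj a t ∧ X.Adj d' t).card
    · obtain ⟨t, ht⟩ := Finset.card_pos.mp hpos
      obtain ⟨-, hat, hdt⟩ := Finset.mem_filter.mp ht
      have := F1 a t d' hat hdt.symm hnadne
      omega
    · exfalso
      have hbdne : b ≠ d' := fun h => hnad (h ▸ hab)
      have hbd' := F1 b c' d' hbc hcd hbdne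
      have hsub : (Finset.univ.filter fun t => X.Adj b t ∧ X.Adj d' t)
          ⊆ (Finset.univ.filter fun t => X.Adj b t) := by
        intro t ht
        obtain ⟨-, h1, -⟩ := Finset.mem_filter.mp ht
        exact Finset.mem_filter.mpr ⟨Finset.mem_univ t, h1⟩
      have hle : (Finset.univ.filter fun t => X.Adj b t).card
          ≤ (Finset.univ.filter fun t => X.Adj b t ∧ X.Adj d' t).card := by
        rw [hdegfilter b, hbd']
        omega
      have heq := Finset.eq_of_subset_of_card_le hsub hle
      have hamem : a ∈ (Finset.univ.filter fun t => X.Adj b t) :=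
        Finset.mem_filter.mpr ⟨Finset.mem_univ a, hab.symm⟩
      rw [← heq] at hamem
      exact hnad ((Finset.mem_filter.mp hamem).2.2).symm
  -- apply step to the pair (e1, f1) of colour t1
  have hm2 : (p 1 t2 1 + 1) + (p 1 t2 1 + 1) = k := by
    obtain ⟨a, b, he⟩ := decomp e1
    obtain ⟨c', d', hf⟩ := decomp f1
    have hab := aux_adj_of_edge X he
    have hcd := aux_adj_of_edge X hf
    have hdisj : ∀ x : V, x ∈ (e1 : Sym2 V) → x ∈ (f1 : Sym2 V) → False := fun x hh1 hh2 =>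
      hna1 (SimpleGraph.lineGraph_adj_iff_exists.mpr ⟨hne1, x, hh1, hh2⟩)
    have hac : a ≠ c' := fun h => hdisj a (by rw [he]; exact Sym2.mem_mk_left a b)
      (by rw [hf, h]; exact Sym2.mem_mk_left c' d')
    have had : a ≠ d' := fun h => hdisj a (by rw [he]; exact Sym2.mem_mk_left a b)
      (by rw [hf, h]; exact Sym2.mem_mk_right c' d')
    have hbc : b ≠ c' := fun h => hdisj b (by rw [he]; exact Sym2.mem_mk_right a b)
      (by rw [hf, h]; exact Sym2.mem_mk_left c' d')
    have hbd : b ≠ d' := fun h => hdisj b (by rw [he]; exact Sym2.mem_mk_right a b)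
      (by rw [hf, h]; exact Sym2.mem_mk_right c' d')
    have heval := aux_commonDisj X e1 f1 a b c' d' he hf hac had hbc hbd
    rw [hv1] at heval
    split_ifs at heval <;>
      first
        | omega
        | (exact step a b c' d' hab ‹X.Adj b c'› hcd ‹¬X.Adj a d'› had)
        | (exact step b a c' d' hab.symm ‹X.Adj a c'› hcd ‹¬X.Adj b d'› hbd)
        | (exact step b a d' c' hab.symm ‹X.Adj a d'› hcd.symm ‹¬X.Adj b c'› hbc)
        | (exact step a b d' c' hab ‹X.Adj b d'› hcd.symm ‹¬X.Adj a c'› hac)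
  -- common-neighbour counts of nonadjacent vertex pairs
  have hmu : ∀ u v : V, u ≠ v → ¬X.Adj u v →
      (Finset.univ.filter fun t => X.Adj u t ∧ X.Adj v t).card = 0 ∨
      (Finset.univ.filter fun t => X.Adj u t ∧ X.Adj v t).card = p 1 t2 1 + 1 := by
    intro u v hne hna
    by_cases hpos : 0 < (Finset.univ.filter fun t => X.Adj u t ∧ X.Adj v t).card
    · obtain ⟨t, ht⟩ := Finset.card_pos.mp hpos
      obtain ⟨-, hat, htv⟩ := Finset.mem_filter.mp ht
      exact Or.inr (F1 u t v hat htv.symm hne)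
    · exact Or.inl (by omega)
  -- Goal 1 : every pair of distinct vertices is distinguished by at least k vertices
  have hGoal1 : ∀ u v : V, u ≠ v → k ≤ (Finset.univ.filter fun w =>
      (X.Adj u w ∧ ¬ X.Adj v w) ∨ (X.Adj v w ∧ ¬ X.Adj u w)).card := by
    intro u v huv
    have hsplit : (Finset.univ.filter fun w =>
        (X.Adj u w ∧ ¬ X.Adj v w) ∨ (X.Adj v w ∧ ¬ X.Adj u w)).card
        = (Finset.univ.filter fun w => X.Adj u w ∧ ¬X.Adj v w).card
          + (Finset.univ.filter fun w => X.Adj v w ∧ ¬X.Adj u w).card := by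
      rw [← Finset.card_union_of_disjoint (by
        simp only [Finset.disjoint_left, Finset.mem_filter, Finset.mem_univ, true_and]
        rintro w ⟨hh1, hh2⟩ ⟨hh3, -⟩
        exact hh2 hh3)]
      congr 1
      ext w
      simp only [Finset.mem_filter, Finset.mem_univ, true_and, Finset.mem_union]
    have hsum1 := Finset.card_filter_add_card_filter_not
      (s := Finset.univ.filter fun w => X.Adj u w) (p := fun w => X.Adj v w)
    rw [Finset.filter_filter, Finset.filter_filter, hdegfilter u] at hsum1
    have hsum2 := Finset.card_filter_add_card_filter_not
      (s := Finset.univ.filter fun w => X.Adj v w) (p := fun w => X.Adj u w)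
    rw [Finset.filter_filter, Finset.filter_filter, hdegfilter v] at hsum2
    have hcomm : (Finset.univ.filter fun w => X.Adj v w ∧ X.Adj u w)
        = (Finset.univ.filter fun w => X.Adj u w ∧ X.Adj v w) := by
      ext w
      simp only [Finset.mem_filter, Finset.mem_univ, true_and]
      tauto
    rw [hcomm] at hsum2
    by_cases hadj : X.Adj u v
    · have hc0 : (Finset.univ.filter fun w => X.Adj u w ∧ X.Adj v w).card = 0 := by
        rw [Finset.card_eq_zero, Finset.eq_empty_iff_forall_notMem]
        intro t ht
        obtain ⟨-, hh1, hh2⟩ := Finset.mem_filter.mp ht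
        exact tri hadj hh2 hh1
      omega
    · rcases hmu u v huv hadj with h | h <;> omega
  -- the number of vertices is at most 3k+1
  have hnV : Fintype.card V ≤ 3 * k + 1 := by
    have hVpos : 0 < Fintype.card V := by omega
    obtain ⟨u0⟩ := Fintype.card_pos_iff.mp hVpos
    have closure : ∀ a b : V,
        (a = u0 ∨ X.Adj u0 a ∨ ∃ t, X.Adj u0 t ∧ X.Adj t a) → X.Adj a b →
        (b = u0 ∨ X.Adj u0 b ∨ ∃ t, X.Adj u0 t ∧ X.Adj t b) := by
      intro a b ha hab
      by_cases hb0 : b = u0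
      · exact Or.inl hb0
      by_cases hb1 : X.Adj u0 b
      · exact Or.inr (Or.inl hb1)
      rcases ha with rfl | ha | ⟨t, hh1, hh2⟩
      · exact (hb1 hab).elim
      · exact Or.inr (Or.inr ⟨a, ha, hab⟩)
      · have hF2 := F2 u0 t a b hh1 hh2 hab hb1 (Ne.symm hb0)
        have hpos : 0 < (Finset.univ.filter fun s => X.Adj u0 s ∧ X.Adj b s).card := by
          omega
        obtain ⟨s', hs'⟩ := Finset.card_pos.mp hpos
        obtain ⟨-, hs1, hs2⟩ := Finset.mem_filter.mp hs'
        exact Or.inr (Or.inr ⟨s', hs1, hs2.symm⟩)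
    have reach : ∀ a b : V, X.Walk a b →
        (a = u0 ∨ X.Adj u0 a ∨ ∃ t, X.Adj u0 t ∧ X.Adj t a) →
        (b = u0 ∨ X.Adj u0 b ∨ ∃ t, X.Adj u0 t ∧ X.Adj t b) := by
      intro a b w
      induction w with
      | nil => exact id
      | cons h p ih => exact fun ha => ih (closure _ _ ha h)
    have hcover : (Finset.univ : Finset V) ⊆ ({u0} : Finset V)
        ∪ (Finset.univ.filter fun t => X.Adj u0 t)
        ∪ (Finset.univ.filter fun z =>
            z ≠ u0 ∧ ¬X.Adj u0 z ∧ ∃ t, X.Adj u0 t ∧ X.Adj t z) := by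
      intro z _
      obtain ⟨w⟩ := hconn u0 z
      have hz := reach u0 z w (Or.inl rfl)
      simp only [Finset.mem_union, Finset.mem_singleton, Finset.mem_filter,
        Finset.mem_univ, true_and]
      by_cases hz0 : z = u0
      · exact Or.inl (Or.inl hz0)
      by_cases hz1 : X.Adj u0 z
      · exact Or.inl (Or.inr hz1)
      rcases hz with h | h | h
      · exact Or.inl (Or.inl h)
      · exact Or.inl (Or.inr h)
      · exact Or.inr ⟨hz0, hz1, h⟩
    set D2 := (Finset.univ.filter fun z =>
        z ≠ u0 ∧ ¬X.Adj u0 z ∧ ∃ t, X.Adj u0 t ∧ X.Adj t z) with hD2def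
    have hD2mu : ∀ z ∈ D2, (Finset.univ.filter fun t => X.Adj u0 t ∧ X.Adj z t).card
        = p 1 t2 1 + 1 := by
      intro z hz
      obtain ⟨-, hz0, -, t, ht1, ht2⟩ := Finset.mem_filter.mp hz
      exact F1 u0 t z ht1 ht2 (Ne.symm hz0)
    -- double counting
    have hcount : (p 1 t2 1 + 1) * D2.card ≤ k * k := by
      calc (p 1 t2 1 + 1) * D2.card
          = ∑ _z ∈ D2, (p 1 t2 1 + 1) := by
            rw [Finset.sum_const, smul_eq_mul, mul_comm]
        _ = ∑ z ∈ D2, (Finset.univ.filter fun t => X.Adj u0 t ∧ X.Adj z t).card :=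
            Finset.sum_congr rfl fun z hz => (hD2mu z hz).symm
        _ = ∑ z ∈ D2, ∑ t : V, if X.Adj u0 t ∧ X.Adj z t then 1 else 0 :=
            Finset.sum_congr rfl fun z _ => Finset.card_filter _ _
        _ = ∑ t : V, ∑ z ∈ D2, if X.Adj u0 t ∧ X.Adj z t then 1 else 0 :=
            Finset.sum_comm
        _ ≤ ∑ t : V, if X.Adj u0 t then k else 0 := by
            refine Finset.sum_le_sum fun t _ => ?_
            by_cases h : X.Adj u0 t
            · rw [if_pos h]
              calc ∑ z ∈ D2, (if X.Adj u0 t ∧ X.Adj z t then 1 else 0)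
                  ≤ ∑ z ∈ D2, (if X.Adj t z then 1 else 0) := by
                    refine Finset.sum_le_sum fun z _ => ?_
                    by_cases hz : X.Adj u0 t ∧ X.Adj z t
                    · rw [if_pos hz, if_pos hz.2.symm]
                    · rw [if_neg hz]
                      split_ifs <;> omega
                _ ≤ ∑ z : V, (if X.Adj t z then 1 else 0) := by
                    refine Finset.sum_le_sum_of_subset_of_nonneg
                      (Finset.subset_univ D2) fun z _ _ => ?_
                    split_ifs <;> omega
                _ = (Finset.univ.filter fun z => X.Adj t z).card :=
                    (Finset.card_filter _ _).symm
                _ = k := hdegfilter t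
            · rw [if_neg h]
              refine le_of_eq (Finset.sum_eq_zero fun z _ => ?_)
              rw [if_neg (fun hz => h hz.1)]
        _ = ∑ t ∈ Finset.univ.filter (fun t => X.Adj u0 t), k := by
            rw [Finset.sum_filter]
        _ = k * k := by
            rw [Finset.sum_const, smul_eq_mul, hdegfilter u0]
    have hD2card : D2.card ≤ 2 * k := by
      have hmpos : 0 < p 1 t2 1 + 1 := by omega
      have hkk2 : k * k = (p 1 t2 1 + 1) * (2 * k) := by
        rw [← hm2]
        ring
      rw [hkk2] at hcount
      exact Nat.le_of_mul_le_mul_left hcount hmpos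
    calc Fintype.card V = (Finset.univ : Finset V).card := rfl
      _ ≤ (({u0} : Finset V)
          ∪ (Finset.univ.filter fun t => X.Adj u0 t) ∪ D2).card :=
          Finset.card_le_card hcover
      _ ≤ (({u0} : Finset V)
          ∪ (Finset.univ.filter fun t => X.Adj u0 t)).card + D2.card :=
          Finset.card_union_le _ _
      _ ≤ (({u0} : Finset V).card
          + (Finset.univ.filter fun t => X.Adj u0 t).card) + D2.card := by
          have := Finset.card_union_le ({u0} : Finset V)
            (Finset.univ.filter fun t => X.Adj u0 t)
          omega
      _ ≤ 3 * k + 1 := by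
          rw [Finset.card_singleton, hdegfilter u0]
          omega
  -- Goal 2
  have hGoal2 : (Fintype.card V : ℝ) / 8 ≤ (k : ℝ) := by
    rw [div_le_iff₀ (by norm_num : (0:ℝ) < 8)]
    have h8 : Fintype.card V ≤ k * 8 := by omega
    calc (Fintype.card V : ℝ) ≤ ((k * 8 : ℕ) : ℝ) := Nat.cast_le.mpr h8
      _ = (k : ℝ) * 8 := by push_cast; ring
  -- Goal 3
  have hGoal3 : ∀ u v : V, X.dist u v = 2 →
      2 * (Finset.univ.filter fun w => X.Adj u w ∧ X.Adj v w).card = k := by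
    intro u v hdist
    have hne : u ≠ v := by
      intro h
      rw [h, SimpleGraph.dist_self] at hdist
      exact absurd hdist (by omega)
    obtain ⟨pw, hlen⟩ := SimpleGraph.exists_walk_of_dist_ne_zero (by omega :
      X.dist u v ≠ 0)
    rw [hdist] at hlen
    cases pw with
    | nil => simp at hlen
    | cons h q =>
      cases q with
      | nil => simp at hlen
      | cons h2 q2 =>
        have hq2 : q2.length = 0 := by
          simp only [SimpleGraph.Walk.length_cons] at hlen
          omega
        have hbv := SimpleGraph.Walk.eq_of_length_eq_zero hq2
        rw [F1 u _ v h (hbv ▸ h2) hne]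
        omega
  refine ⟨hGoal1, hGoal2, hGoal3, ?_⟩
  intro σ hσ hσ1
  set W := Finset.univ.filter fun x => σ x ≠ x with hWdef
  set M := X.edgeFinset.filter fun e => Sym2.map σ e ≠ e with hMdef
  -- the support has at least k elements
  have hWk : k ≤ W.card := by
    have hx0 : ∃ x : V, σ x ≠ x := by
      by_contra hcon
      push_neg at hcon
      exact hσ1 (Equiv.ext fun x => (hcon x).trans rfl)
    obtain ⟨x0, hx0⟩ := hx0
    refine le_trans (hGoal1 x0 (σ x0) (Ne.symm hx0)) (Finset.card_le_card ?_)
    intro w hw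
    simp only [Finset.mem_filter, Finset.mem_univ, true_and] at hw
    rw [hWdef]
    simp only [Finset.mem_filter, Finset.mem_univ, true_and]
    intro hfix
    have hiff : X.Adj (σ x0) w ↔ X.Adj x0 w := by
      conv_lhs => rw [← hfix]
      exact hσ x0 w
    rcases hw with ⟨hh1, hh2⟩ | ⟨hh1, hh2⟩
    · exact hh2 (hiff.mpr hh1)
    · exact hh2 (hiff.mp hh1)
  -- each vertex lies on k edges
  have hInc : ∀ x : V, (X.edgeFinset.filter fun e => x ∈ e).card = k := by
    intro x
    rw [← hreg x, ← SimpleGraph.card_incidenceFinset_eq_degree,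
      SimpleGraph.incidenceFinset_eq_filter]
  -- at most one fixed edge at a moved vertex
  have hFix1 : ∀ x : V, σ x ≠ x →
      (X.edgeFinset.filter fun e => x ∈ e ∧ Sym2.map σ e = e).card ≤ 1 := by
    intro x hx
    apply Finset.card_le_one.mpr
    have key : ∀ e ∈ X.edgeFinset.filter fun e => x ∈ e ∧ Sym2.map σ e = e,
        e = s(x, σ x) := by
      intro e he
      obtain ⟨heE, hxe, hfix⟩ := Finset.mem_filter.mp he
      obtain ⟨y, hy⟩ := Sym2.mem_iff_exists.mp hxe
      subst hy
      rw [Sym2.map_pair_eq, Sym2.eq_iff] at hfix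
      rcases hfix with ⟨h1, h2⟩ | ⟨h1, h2⟩
      · exact absurd h1 hx
      · rw [← h1]
    intro e he f hf
    rw [key e he, key f hf]
  -- every moved vertex is on at least k-1 moved edges
  have hmoved : ∀ x ∈ W, k - 1 ≤ (M.filter fun e => x ∈ e).card := by
    intro x hxW
    rw [hWdef] at hxW
    have hx : σ x ≠ x := (Finset.mem_filter.mp hxW).2
    have hsum := Finset.card_filter_add_card_filter_not
      (s := X.edgeFinset.filter fun e => x ∈ e) (p := fun e => Sym2.map σ e = e)
    rw [Finset.filter_filter, Finset.filter_filter, hInc x] at hsum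
    have hM' : (M.filter fun e => x ∈ e)
        = X.edgeFinset.filter fun e => x ∈ e ∧ ¬Sym2.map σ e = e := by
      rw [hMdef, Finset.filter_filter]
      ext e
      simp only [Finset.mem_filter]
      tauto
    rw [hM']
    have := hFix1 x hx
    omega
  -- double counting: moved incidences
  have hbcount : W.card * (k - 1) ≤ 2 * M.card := by
    have hlast : ∀ e ∈ M, (∑ x ∈ W, if x ∈ e then 1 else 0) ≤ 2 := by
      intro e heM
      rw [hMdef] at heM
      have heE : e ∈ X.edgeSet :=
        SimpleGraph.mem_edgeFinset.mp (Finset.mem_filter.mp heM).1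
      obtain ⟨a, b, hab⟩ := decomp ⟨e, heE⟩
      have hab' : e = s(a, b) := hab
      calc (∑ x ∈ W, if x ∈ e then 1 else 0)
          ≤ ∑ x : V, (if x ∈ e then 1 else 0) := by
            refine Finset.sum_le_sum_of_subset_of_nonneg
              (Finset.subset_univ W) fun x _ _ => ?_
            split_ifs <;> omega
        _ = (Finset.univ.filter fun x => x ∈ e).card := (Finset.card_filter _ _).symm
        _ ≤ ({a, b} : Finset V).card := by
            refine Finset.card_le_card fun x hx => ?_
            have := (Finset.mem_filter.mp hx).2
            rw [hab', Sym2.mem_iff] at this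
            rcases this with rfl | rfl
            · exact Finset.mem_insert_self _ _
            · exact Finset.mem_insert_of_mem (Finset.mem_singleton_self _)
        _ ≤ 2 := by
            calc ({a, b} : Finset V).card ≤ ({b} : Finset V).card + 1 :=
              Finset.card_insert_le a {b}
            _ = 2 := by rw [Finset.card_singleton]
    calc W.card * (k - 1) = ∑ _x ∈ W, (k - 1) := by
          rw [Finset.sum_const, smul_eq_mul]
      _ ≤ ∑ x ∈ W, (M.filter fun e => x ∈ e).card := Finset.sum_le_sum hmoved
      _ = ∑ x ∈ W, ∑ e ∈ M, (if x ∈ e then 1 else 0) :=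
          Finset.sum_congr rfl fun x _ => Finset.card_filter _ _
      _ = ∑ e ∈ M, ∑ x ∈ W, (if x ∈ e then 1 else 0) := Finset.sum_comm
      _ ≤ ∑ _e ∈ M, 2 := Finset.sum_le_sum hlast
      _ = 2 * M.card := by rw [Finset.sum_const, smul_eq_mul, mul_comm]
  -- edge count
  have hEcard : 2 * X.edgeFinset.card = Fintype.card V * k := by
    rw [← SimpleGraph.sum_degrees_eq_twice_card_edges]
    have : ∑ v : V, X.degree v = ∑ _v : V, k :=
      Finset.sum_congr rfl fun v _ => hreg v
    rw [this, Finset.sum_const, smul_eq_mul, Finset.card_univ]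
  have hstep : (3 * k + 1) * k ≤ 16 * (k * (k - 1)) := by
    obtain ⟨K, hK1, hK2⟩ : ∃ K, k = K + 1 ∧ 2 ≤ K := ⟨k - 1, by omega, by omega⟩
    rw [hK1]
    simp only [Nat.add_sub_cancel]
    calc (3 * (K + 1) + 1) * (K + 1) ≤ (16 * K) * (K + 1) :=
        Nat.mul_le_mul_right _ (by omega)
      _ = 16 * ((K + 1) * K) := by ring
  have hcomb1 : k * (k - 1) ≤ 2 * M.card :=
    le_trans (Nat.mul_le_mul_right _ hWk) hbcount
  have hcomb2 : 2 * X.edgeFinset.card ≤ (3 * k + 1) * k := by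
    rw [hEcard]
    exact Nat.mul_le_mul_right k hnV
  have hfinal : X.edgeFinset.card ≤ 16 * M.card := by
    have h16 : 16 * (k * (k - 1)) ≤ 16 * (2 * M.card) := Nat.mul_le_mul_left 16 hcomb1
    omega
  exact ⟨hbcount, hfinal⟩
end

section
/- Let 𝔛 be a homogeneous coherent configuration on n vertices and I a symmetric set of edge colors (closed under i ↦ i*) such that the graph X_I is the triangular graph T(s), with Delsarte clique geometry 𝒞 (the cliques corresponding to the points of the underlying s-set). Suppose there is 0 < α < 1/2 such that for every clique C ∈ 𝒞 and every pair of distinct x,y ∈ C, at least α|C| vertices z ∈ C satisfy c(z,x) ≠ c(z,y). Then every nontrivial automorphism σ of 𝔛 has support of size at least αn/2, i.e., motion(𝔛) ≥ αn/2. -/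
open Finset

lemma tg_pair_of_mem {s : ℕ} {A : Finset (Fin s)} (hA : A.card = 2) {a : Fin s}
    (ha : a ∈ A) : ∃ b, b ≠ a ∧ A = {a, b} := by
  obtain ⟨x, y, hxy, rfl⟩ := Finset.card_eq_two.mp hA
  rcases Finset.mem_insert.mp ha with rfl | h
  · exact ⟨y, hxy.symm, rfl⟩
  · rw [Finset.mem_singleton] at h; subst h
    exact ⟨x, hxy, Finset.pair_comm x a⟩

lemma tg_clique_card {V : Type*} [Fintype V] [DecidableEq V] {s : ℕ}
    (φ : V ≃ {x : Finset (Fin s) // x.card = 2}) (q : Fin s) :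
    (Finset.univ.filter fun v : V => q ∈ (φ v).1).card = s - 1 := by
  have hb := Finset.card_bij
    (s := (Finset.univ : Finset (Fin s)).erase q)
    (t := Finset.univ.filter fun v : V => q ∈ (φ v).1)
    (fun t ht => φ.symm ⟨{q, t}, Finset.card_pair (Finset.ne_of_mem_erase ht).symm⟩)
    (by
      intro t ht
      refine Finset.mem_filter.mpr ⟨Finset.mem_univ _, ?_⟩
      rw [Equiv.apply_symm_apply]
      exact Finset.mem_insert_self _ _)
    (by
      intro t1 h1 t2 h2 he
      have := φ.symm.injective he
      have hv : ({q, t1} : Finset (Fin s)) = {q, t2} := congrArg Subtype.val this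
      have ht1 : t1 ∈ ({q, t2} : Finset (Fin s)) := hv ▸ Finset.mem_insert.mpr (Or.inr (Finset.mem_singleton_self t1))
      rcases Finset.mem_insert.mp ht1 with h | h
      · exact absurd h (Finset.ne_of_mem_erase h1)
      · exact Finset.mem_singleton.mp h)
    (by
      intro v hv
      obtain ⟨b, hbq, hAb⟩ := tg_pair_of_mem (φ v).2 (Finset.mem_filter.mp hv).2
      refine ⟨b, Finset.mem_erase.mpr ⟨hbq, Finset.mem_univ _⟩, ?_⟩
      have : (⟨{q, b}, Finset.card_pair (Ne.symm hbq)⟩ : {x : Finset (Fin s) // x.card = 2}) = φ v :=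
        Subtype.ext hAb.symm
      show φ.symm ⟨{q, b}, _⟩ = v
      rw [this, Equiv.symm_apply_apply])
  rw [← hb, Finset.card_erase_of_mem (Finset.mem_univ q), Finset.card_univ, Fintype.card_fin]

/-- Let `𝔛` be a homogeneous coherent configuration, `I` a symmetric set
of edge colors such that `X_I` is the triangular graph `T(s)` (vertices: 2-subsets of an
`s`-set, adjacent iff they meet), with Delsarte cliques `C_p = {v : p ∈ φ v}`. If for some
`0 < α < 1/2` every pair of distinct vertices of each clique is distinguished by at least
`α |C|` vertices of that clique, then every nontrivial automorphism of `𝔛` has support of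
size at least `α n / 2`. -/
theorem triangular_graph_motion {V : Type*} [Fintype V] [DecidableEq V] {r : ℕ}
    (c : V → V → Fin r)
    (hconf1 : ∀ v u w : V, u ≠ w → c v v ≠ c u w)
    (hconf2 : ∀ i : Fin r, ∃ istar : Fin r, ∀ u v : V, c u v = i → c v u = istar)
    (hhom : ∀ u v : V, c u u = c v v)
    (p : Fin r → Fin r → Fin r → ℕ)
    (hcoh : ∀ (i j t : Fin r) (u v : V), c u v = t →
      (Finset.univ.filter fun w => c u w = i ∧ c w v = j).card = p i j t)
    (I : Finset (Fin r))
    (hIsymm : ∀ u v : V, c u v ∈ I → c v u ∈ I)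
    (hIedge : ∀ v : V, c v v ∉ I)
    (s : ℕ)
    -- X_I is the triangular graph T(s)
    (φ : V ≃ {x : Finset (Fin s) // x.card = 2})
    (hφ : ∀ u v : V, u ≠ v → (c u v ∈ I ↔ ¬ Disjoint (φ u).1 (φ v).1))
    (α : ℝ) (hα0 : 0 < α) (hα1 : α < 1 / 2)
    -- within each Delsarte clique, pairs are distinguished by an α-fraction of the clique
    (hdist : ∀ q : Fin s,
      ∀ x ∈ Finset.univ.filter (fun v : V => q ∈ (φ v).1),
      ∀ y ∈ Finset.univ.filter (fun v : V => q ∈ (φ v).1), x ≠ y →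
        α * ((Finset.univ.filter fun v : V => q ∈ (φ v).1).card : ℝ) ≤
          (((Finset.univ.filter fun v : V => q ∈ (φ v).1).filter
              fun z => c z x ≠ c z y).card : ℝ)) :
    ∀ σ : Equiv.Perm V, (∀ u v : V, c (σ u) (σ v) = c u v) → σ ≠ 1 →
      α * (Fintype.card V : ℝ) / 2 ≤
        ((Finset.univ.filter fun x => σ x ≠ x).card : ℝ) := by
  intro σ hσc hσ1
  obtain ⟨a0, ha0⟩ : ∃ a : V, σ a ≠ a := by
    by_contra h; push_neg at h; exact hσ1 (Equiv.ext h)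
  have hb0 : σ (σ a0) ≠ σ a0 := fun h => ha0 (σ.injective h)
  have hsupp2 : 2 ≤ (Finset.univ.filter fun x : V => σ x ≠ x).card := by
    have hsub : ({σ a0, a0} : Finset V) ⊆ Finset.univ.filter fun x : V => σ x ≠ x := by
      intro z hz
      rcases Finset.mem_insert.mp hz with rfl | hz
      · exact Finset.mem_filter.mpr ⟨Finset.mem_univ _, hb0⟩
      · rw [Finset.mem_singleton] at hz; subst hz
        exact Finset.mem_filter.mpr ⟨Finset.mem_univ _, ha0⟩
    calc 2 = ({σ a0, a0} : Finset V).card := (Finset.card_pair ha0).symm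
    _ ≤ _ := Finset.card_le_card hsub
  by_cases hs : s ≤ 4
  · -- small case: n ≤ 6
    have hcV : Fintype.card V = s.choose 2 := by
      rw [Fintype.card_congr φ, Fintype.card_subtype, ← Finset.powerset_univ,
        ← Finset.powersetCard_eq_filter, Finset.card_powersetCard, Finset.card_univ,
        Fintype.card_fin]
    have h6 : Fintype.card V ≤ 6 := by
      rw [hcV]
      calc s.choose 2 ≤ (4).choose 2 := Nat.choose_le_choose 2 hs
      _ = 6 := by decide
    have h6R : (Fintype.card V : ℝ) ≤ 6 := by exact_mod_cast h6
    have h2R : (2:ℝ) ≤ ((Finset.univ.filter fun x : V => σ x ≠ x).card : ℝ) := by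
      exact_mod_cast hsupp2
    nlinarith
  push_neg at hs
  have hk4 : 4 ≤ s - 1 := by omega
  have hC : ∀ q : Fin s, (Finset.univ.filter fun v : V => q ∈ (φ v).1).card = s - 1 :=
    tg_clique_card φ
  by_contra hlt
  push_neg at hlt
  -- hlt : supp.card < α * n / 2
  -- closed neighborhood count
  have hN : ∀ y : V,
      (Finset.univ.filter fun w : V => ¬ Disjoint (φ w).1 (φ y).1).card + 1 = 2 * (s - 1) := by
    intro y
    obtain ⟨a, b, hab, hy⟩ := Finset.card_eq_two.mp (φ y).2
    have hNeq : (Finset.univ.filter fun w : V => ¬ Disjoint (φ w).1 (φ y).1) =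
        (Finset.univ.filter fun v : V => a ∈ (φ v).1) ∪
        (Finset.univ.filter fun v : V => b ∈ (φ v).1) := by
      ext w
      simp only [Finset.mem_filter, Finset.mem_union, Finset.mem_univ, true_and, hy,
        Finset.not_disjoint_iff]
      constructor
      · rintro ⟨t, ht1, ht2⟩
        rcases Finset.mem_insert.mp ht2 with rfl | ht2
        · exact Or.inl ht1
        · rw [Finset.mem_singleton] at ht2; subst ht2; exact Or.inr ht1
      · rintro (h | h)
        · exact ⟨a, h, Finset.mem_insert_self _ _⟩
        · exact ⟨b, h, Finset.mem_insert.mpr (Or.inr (Finset.mem_singleton_self b))⟩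
    have hint : (Finset.univ.filter fun v : V => a ∈ (φ v).1) ∩
        (Finset.univ.filter fun v : V => b ∈ (φ v).1) = {y} := by
      ext v
      simp only [Finset.mem_inter, Finset.mem_filter, Finset.mem_univ, true_and,
        Finset.mem_singleton]
      constructor
      · rintro ⟨ha', hb'⟩
        have hsub : ({a, b} : Finset (Fin s)) ⊆ (φ v).1 := by
          intro t ht
          rcases Finset.mem_insert.mp ht with rfl | ht
          · exact ha'
          · rw [Finset.mem_singleton] at ht; subst ht; exact hb'
        have heq : ({a, b} : Finset (Fin s)) = (φ v).1 :=
          Finset.eq_of_subset_of_card_le hsub (by rw [(φ v).2, Finset.card_pair hab])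
        exact φ.injective (Subtype.ext (heq.symm.trans hy.symm))
      · rintro rfl
        rw [hy]
        exact ⟨Finset.mem_insert_self _ _, Finset.mem_insert.mpr (Or.inr (Finset.mem_singleton_self b))⟩
    have hcui := Finset.card_union_add_card_inter
      (Finset.univ.filter fun v : V => a ∈ (φ v).1)
      (Finset.univ.filter fun v : V => b ∈ (φ v).1)
    rw [hint, hC, hC, Finset.card_singleton] at hcui
    rw [hNeq]
    omega
  -- double counting
  have hsum : ∑ x : V,
      ((Finset.univ.filter fun y : V => σ y ≠ y) ∩
        (Finset.univ.filter fun w : V => ¬ Disjoint (φ w).1 (φ x).1)).card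
      = (Finset.univ.filter fun y : V => σ y ≠ y).card * (2 * (s - 1) - 1) := by
    have h1 : ∀ x : V, ((Finset.univ.filter fun y : V => σ y ≠ y) ∩
        (Finset.univ.filter fun w : V => ¬ Disjoint (φ w).1 (φ x).1)).card
        = ∑ y ∈ (Finset.univ.filter fun y : V => σ y ≠ y),
            if ¬ Disjoint (φ y).1 (φ x).1 then 1 else 0 := by
      intro x
      rw [← Finset.card_filter]
      congr 1
      ext y
      simp only [Finset.mem_inter, Finset.mem_filter, Finset.mem_univ, true_and]
    calc ∑ x : V, ((Finset.univ.filter fun y : V => σ y ≠ y) ∩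
          (Finset.univ.filter fun w : V => ¬ Disjoint (φ w).1 (φ x).1)).card
        = ∑ x : V, ∑ y ∈ (Finset.univ.filter fun y : V => σ y ≠ y),
            (if ¬ Disjoint (φ y).1 (φ x).1 then 1 else 0) := by
          exact Finset.sum_congr rfl fun x _ => h1 x
      _ = ∑ y ∈ (Finset.univ.filter fun y : V => σ y ≠ y), ∑ x : V,
            (if ¬ Disjoint (φ y).1 (φ x).1 then 1 else 0) := Finset.sum_comm
      _ = ∑ y ∈ (Finset.univ.filter fun y : V => σ y ≠ y),
            (Finset.univ.filter fun w : V => ¬ Disjoint (φ w).1 (φ y).1).card := by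
          refine Finset.sum_congr rfl fun y _ => ?_
          rw [Finset.card_filter]
          exact Finset.sum_congr rfl fun x _ => if_congr (not_congr disjoint_comm) rfl rfl
      _ = ∑ _y ∈ (Finset.univ.filter fun y : V => σ y ≠ y), (2 * (s - 1) - 1) := by
          refine Finset.sum_congr rfl fun y _ => ?_
          have := hN y; omega
      _ = _ := by rw [Finset.sum_const, smul_eq_mul]
  have hn0 : (0:ℝ) < Fintype.card V := by
    exact_mod_cast Fintype.card_pos_iff.mpr ⟨a0⟩
  have hkR : (4:ℝ) ≤ ((s-1 : ℕ) : ℝ) := by exact_mod_cast hk4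
  obtain ⟨x0, hx0⟩ : ∃ x : V, (((Finset.univ.filter fun y : V => σ y ≠ y) ∩
      (Finset.univ.filter fun w : V => ¬ Disjoint (φ w).1 (φ x).1)).card : ℝ)
      < α * ((s-1:ℕ) : ℝ) := by
    by_contra h
    push_neg at h
    have hge : (Fintype.card V : ℝ) * (α * ((s-1:ℕ):ℝ)) ≤
        ∑ x : V, (((Finset.univ.filter fun y : V => σ y ≠ y) ∩
          (Finset.univ.filter fun w : V => ¬ Disjoint (φ w).1 (φ x).1)).card : ℝ) := by
      calc (Fintype.card V : ℝ) * (α * ((s-1:ℕ):ℝ)) = ∑ _x : V, α * ((s-1:ℕ):ℝ) := by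
            rw [Finset.sum_const, Finset.card_univ, nsmul_eq_mul]
      _ ≤ _ := Finset.sum_le_sum fun x _ => h x
    have hcast : (∑ x : V, (((Finset.univ.filter fun y : V => σ y ≠ y) ∩
          (Finset.univ.filter fun w : V => ¬ Disjoint (φ w).1 (φ x).1)).card : ℝ))
        = ((Finset.univ.filter fun y : V => σ y ≠ y).card : ℝ) * ((2*(s-1)-1 : ℕ) : ℝ) := by
      rw [← Nat.cast_sum, hsum, Nat.cast_mul]
    have h2k : ((2*(s-1)-1 : ℕ):ℝ) = 2*((s-1:ℕ):ℝ) - 1 := by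
      have h1 : 1 ≤ 2*(s-1) := by omega
      rw [Nat.cast_sub h1]
      push_cast
      ring
    rw [hcast, h2k] at hge
    have hS0 : (0:ℝ) ≤ ((Finset.univ.filter fun y : V => σ y ≠ y).card : ℝ) := Nat.cast_nonneg _
    have hmul := mul_lt_mul_of_pos_right hlt (show (0:ℝ) < 2*((s-1:ℕ):ℝ) - 1 by linarith)
    nlinarith [mul_pos hα0 hn0]
  obtain ⟨p0, q0, hpq, hx0eq⟩ := Finset.card_eq_two.mp (φ x0).2
  -- the two cliques through x0 are fixed pointwise
  have hfix : ∀ q : Fin s, q ∈ (φ x0).1 → ∀ y : V, q ∈ (φ y).1 → σ y = y := by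
    intro q hq y hy
    by_contra hyy
    have hCsub : ((Finset.univ.filter fun v : V => q ∈ (φ v).1).filter fun z => σ z ≠ z) ⊆
        (Finset.univ.filter fun y : V => σ y ≠ y) ∩
        (Finset.univ.filter fun w : V => ¬ Disjoint (φ w).1 (φ x0).1) := by
      intro v hv
      rw [Finset.mem_filter] at hv
      obtain ⟨hv1, hv2⟩ := hv
      rw [Finset.mem_filter] at hv1
      exact Finset.mem_inter.mpr ⟨Finset.mem_filter.mpr ⟨Finset.mem_univ _, hv2⟩,
        Finset.mem_filter.mpr ⟨Finset.mem_univ _, Finset.not_disjoint_iff.mpr ⟨q, hv1.2, hq⟩⟩⟩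
    have hCbad : (((Finset.univ.filter fun v : V => q ∈ (φ v).1).filter fun z => σ z ≠ z).card : ℝ)
        < α * ((s-1:ℕ):ℝ) :=
      lt_of_le_of_lt (by exact_mod_cast Finset.card_le_card hCsub) hx0
    have hsplitcard : ((Finset.univ.filter fun v : V => q ∈ (φ v).1).filter fun z => σ z = z).card
        + ((Finset.univ.filter fun v : V => q ∈ (φ v).1).filter fun z => σ z ≠ z).card
        = s - 1 := by
      rw [← hC q]
      exact Finset.card_filter_add_card_filter_not (fun z => σ z = z)
    have hF3 : 2 < ((Finset.univ.filter fun v : V => q ∈ (φ v).1).filter fun z => σ z = z).card := by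
      by_contra hle
      push_neg at hle
      have h2 : ((((Finset.univ.filter fun v : V => q ∈ (φ v).1).filter fun z => σ z = z).card : ℝ)) ≤ 2 := by
        exact_mod_cast hle
      have hcR : ((((Finset.univ.filter fun v : V => q ∈ (φ v).1).filter fun z => σ z = z).card : ℝ))
          + ((((Finset.univ.filter fun v : V => q ∈ (φ v).1).filter fun z => σ z ≠ z).card : ℝ))
          = ((s-1:ℕ):ℝ) := by exact_mod_cast hsplitcard
      nlinarith
    obtain ⟨z1, hz1, z2, hz2, z3, hz3, h12, h13, h23⟩ := Finset.two_lt_card.mp hF3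
    have hFz : ∀ z ∈ ((Finset.univ.filter fun v : V => q ∈ (φ v).1).filter fun z => σ z = z),
        σ z = z ∧ q ∈ (φ z).1 := by
      intro z hz
      rw [Finset.mem_filter] at hz
      exact ⟨hz.2, (Finset.mem_filter.mp hz.1).2⟩
    have hadjF : ∀ z ∈ ((Finset.univ.filter fun v : V => q ∈ (φ v).1).filter fun z => σ z = z),
        ¬ Disjoint (φ (σ y)).1 (φ z).1 := by
      intro z hz
      obtain ⟨hzf, hzq⟩ := hFz z hz
      have hzy : z ≠ y := fun e => hyy (e ▸ hzf)
      have hσyz : σ y ≠ z := fun e => hzy (σ.injective (e.trans hzf.symm)).symm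
      have hcyz : c y z ∈ I := (hφ y z (Ne.symm hzy)).mpr (Finset.not_disjoint_iff.mpr ⟨q, hy, hzq⟩)
      have h2 : c (σ y) z ∈ I := by
        have h3 := hσc y z; rw [hzf] at h3; rwa [h3]
      exact (hφ (σ y) z hσyz).mp h2
    have hqin : q ∈ (φ (σ y)).1 := by
      by_contra hqn
      have key : ∀ z ∈ ((Finset.univ.filter fun v : V => q ∈ (φ v).1).filter fun z => σ z = z),
          ∃ t, t ∈ (φ (σ y)).1 ∧ (φ z).1 = {q, t} := by
        intro z hz
        obtain ⟨t, ht1, ht2⟩ := Finset.not_disjoint_iff.mp (hadjF z hz)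
        have htq : t ≠ q := fun e => hqn (e ▸ ht1)
        have hsub : ({q, t} : Finset (Fin s)) ⊆ (φ z).1 := by
          intro u hu
          rcases Finset.mem_insert.mp hu with rfl | hu
          · exact (hFz z hz).2
          · rw [Finset.mem_singleton] at hu; subst hu; exact ht2
        exact ⟨t, ht1, (Finset.eq_of_subset_of_card_le hsub
            (by rw [(φ z).2, Finset.card_pair (Ne.symm htq)])).symm⟩
      obtain ⟨t1, ht1, he1⟩ := key z1 hz1
      obtain ⟨t2, ht2, he2⟩ := key z2 hz2
      obtain ⟨t3, ht3, he3⟩ := key z3 hz3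
      obtain ⟨u, v, huv, hWuv⟩ := Finset.card_eq_two.mp (φ (σ y)).2
      rw [hWuv] at ht1 ht2 ht3
      simp only [Finset.mem_insert, Finset.mem_singleton] at ht1 ht2 ht3
      have hinj : ∀ z z' : V, (φ z).1 = (φ z').1 → z = z' :=
        fun z z' h => φ.injective (Subtype.ext h)
      rcases ht1 with rfl | rfl <;> rcases ht2 with rfl | rfl <;> rcases ht3 with rfl | rfl <;>
        first
          | exact h12 (hinj _ _ (he1.trans he2.symm))
          | exact h13 (hinj _ _ (he1.trans he3.symm))
          | exact h23 (hinj _ _ (he2.trans he3.symm))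
    have hyCq : y ∈ Finset.univ.filter fun v : V => q ∈ (φ v).1 :=
      Finset.mem_filter.mpr ⟨Finset.mem_univ _, hy⟩
    have hσyCq : σ y ∈ Finset.univ.filter fun v : V => q ∈ (φ v).1 :=
      Finset.mem_filter.mpr ⟨Finset.mem_univ _, hqin⟩
    have hd := hdist q y hyCq (σ y) hσyCq (fun e => hyy e.symm)
    rw [hC q] at hd
    have hdsub : ((Finset.univ.filter fun v : V => q ∈ (φ v).1).filter fun z => c z y ≠ c z (σ y)) ⊆
        ((Finset.univ.filter fun v : V => q ∈ (φ v).1).filter fun z => σ z ≠ z) := by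
      intro z hz'
      rw [Finset.mem_filter] at hz'
      refine Finset.mem_filter.mpr ⟨hz'.1, fun hzz => hz'.2 ?_⟩
      have h3 := hσc z y
      rw [hzz] at h3
      exact h3.symm
    have hcards : ((((Finset.univ.filter fun v : V => q ∈ (φ v).1).filter
        fun z => c z y ≠ c z (σ y)).card : ℝ)) ≤
        (((Finset.univ.filter fun v : V => q ∈ (φ v).1).filter fun z => σ z ≠ z).card : ℝ) := by
      exact_mod_cast Finset.card_le_card hdsub
    linarith
  -- every vertex is fixed
  have hp0x : p0 ∈ (φ x0).1 := by rw [hx0eq]; exact Finset.mem_insert_self _ _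
  have hq0x : q0 ∈ (φ x0).1 := by
    rw [hx0eq]; exact Finset.mem_insert.mpr (Or.inr (Finset.mem_singleton_self q0))
  have hfixall : ∀ v : V, σ v = v := by
    intro v
    by_cases hvp : p0 ∈ (φ v).1
    · exact hfix p0 hp0x v hvp
    by_cases hvq : q0 ∈ (φ v).1
    · exact hfix q0 hq0x v hvq
    obtain ⟨a, b, hab, hv⟩ := Finset.card_eq_two.mp (φ v).2
    have ha : a ∈ (φ v).1 := by rw [hv]; exact Finset.mem_insert_self _ _
    have hb : b ∈ (φ v).1 := by
      rw [hv]; exact Finset.mem_insert.mpr (Or.inr (Finset.mem_singleton_self b))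
    have hadj : ∀ u : V, σ u = u → v ≠ u → ¬ Disjoint (φ v).1 (φ u).1 →
        ¬ Disjoint (φ (σ v)).1 (φ u).1 := by
      intro u hu hne hnd
      have hcvu : c v u ∈ I := (hφ v u hne).mpr hnd
      have hcsv : c (σ v) u ∈ I := by
        have h1 := hσc v u; rw [hu] at h1; rwa [h1]
      have hne2 : σ v ≠ u := by
        intro e
        have h1 := hσc v u
        rw [hu, e] at h1
        exact hconf1 u v u hne h1
      exact (hφ (σ v) u hne2).mp hcsv
    have hW : ∀ (qq t : Fin s), qq ∈ (φ x0).1 → qq ∉ (φ v).1 → t ∈ (φ v).1 →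
        qq ∈ (φ (σ v)).1 ∨ t ∈ (φ (σ v)).1 := by
      intro qq t hqx hqv htv
      have hqt : qq ≠ t := fun e => hqv (e ▸ htv)
      have hφu : (φ (φ.symm ⟨{qq, t}, Finset.card_pair hqt⟩)).1 = {qq, t} := by
        rw [Equiv.apply_symm_apply]
      have hσu : σ (φ.symm ⟨{qq, t}, Finset.card_pair hqt⟩) = φ.symm ⟨{qq, t}, Finset.card_pair hqt⟩ :=
        hfix qq hqx _ (by rw [hφu]; exact Finset.mem_insert_self _ _)
      have hvu : v ≠ φ.symm ⟨{qq, t}, Finset.card_pair hqt⟩ := by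
        intro e
        exact hqv (by rw [e, hφu]; exact Finset.mem_insert_self _ _)
      have hnd : ¬ Disjoint (φ v).1 (φ (φ.symm ⟨{qq, t}, Finset.card_pair hqt⟩)).1 :=
        Finset.not_disjoint_iff.mpr ⟨t, htv, by
          rw [hφu]; exact Finset.mem_insert.mpr (Or.inr (Finset.mem_singleton_self t))⟩
      have hres := hadj _ hσu hvu hnd
      rw [hφu] at hres
      obtain ⟨x, hx1, hx2⟩ := Finset.not_disjoint_iff.mp hres
      rcases Finset.mem_insert.mp hx2 with rfl | hx2
      · exact Or.inl hx1
      · rw [Finset.mem_singleton] at hx2; exact Or.inr (hx2 ▸ hx1)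
    have hpa := hW p0 a hp0x hvp ha
    have hpb := hW p0 b hp0x hvp hb
    have hqa := hW q0 a hq0x hvq ha
    have hqb := hW q0 b hq0x hvq hb
    by_cases hpW : p0 ∈ (φ (σ v)).1
    · by_cases hqW : q0 ∈ (φ (σ v)).1
      · -- σ v = x0, impossible
        exfalso
        have hsub : ({p0, q0} : Finset (Fin s)) ⊆ (φ (σ v)).1 := by
          intro z hz
          rcases Finset.mem_insert.mp hz with rfl | hz
          · exact hpW
          · rw [Finset.mem_singleton] at hz; subst hz; exact hqW
        have heq : ({p0, q0} : Finset (Fin s)) = (φ (σ v)).1 :=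
          Finset.eq_of_subset_of_card_le hsub (by rw [(φ (σ v)).2, Finset.card_pair hpq])
        have hsvx : σ v = x0 := φ.injective (Subtype.ext (heq.symm.trans hx0eq.symm))
        have hx0fix : σ x0 = x0 := hfix p0 hp0x x0 hp0x
        have hvx : v = x0 := σ.injective (hsvx.trans hx0fix.symm)
        exact hvp (by rw [hvx]; exact hp0x)
      · -- p0, a, b all in the 2-set φ (σ v): impossible
        exfalso
        have haW : a ∈ (φ (σ v)).1 := hqa.resolve_left hqW
        have hbW : b ∈ (φ (σ v)).1 := hqb.resolve_left hqW
        have hap : p0 ≠ a := fun e => hvp (e ▸ ha)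
        have hbp : p0 ≠ b := fun e => hvp (e ▸ hb)
        have hsub : ({p0, a, b} : Finset (Fin s)) ⊆ (φ (σ v)).1 := by
          intro z hz
          rcases Finset.mem_insert.mp hz with rfl | hz
          · exact hpW
          rcases Finset.mem_insert.mp hz with rfl | hz
          · exact haW
          rw [Finset.mem_singleton] at hz; subst hz; exact hbW
        have h3 : ({p0, a, b} : Finset (Fin s)).card = 3 := by
          rw [Finset.card_insert_of_notMem (by
            simp only [Finset.mem_insert, Finset.mem_singleton]
            push_neg
            exact ⟨hap, hbp⟩), Finset.card_pair hab]
        have hle := Finset.card_le_card hsub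
        rw [(φ (σ v)).2, h3] at hle
        omega
    · have haW : a ∈ (φ (σ v)).1 := hpa.resolve_left hpW
      have hbW : b ∈ (φ (σ v)).1 := hpb.resolve_left hpW
      have hsub : ({a, b} : Finset (Fin s)) ⊆ (φ (σ v)).1 := by
        intro z hz
        rcases Finset.mem_insert.mp hz with rfl | hz
        · exact haW
        rw [Finset.mem_singleton] at hz; subst hz; exact hbW
      have heq : ({a, b} : Finset (Fin s)) = (φ (σ v)).1 :=
        Finset.eq_of_subset_of_card_le hsub (by rw [(φ (σ v)).2, Finset.card_pair hab])
      exact φ.injective (Subtype.ext (heq.symm.trans hv.symm))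
  exact ha0 (hfixall a0)
end

section
/- Let 𝔛 be an association scheme of rank 4 and diameter 2 with constituents ordered by degree, satisfying k_2 ≤ ε k_3/2 for some 0 < ε ≤ 1/100. Assume p(2,2;2) ≥ (1−δ)k_2/2 for some 0 < δ ≤ 1/100 and k_2/8 ≤ p(2,2;1) ≤ k_2/3. Then there is no 3-claw in colors (2,3): there do not exist vertices x, y_1, y_2, y_3 with c(x,y_i) = 2 for all i and c(y_i,y_j) = 3 for all i ≠ j. -/
open Finset

/-- In an association scheme of rank 4 and diameter 2 with constituents
ordered by degree, `k 2 ≤ ε k 3 / 2` with `0 < ε ≤ 1/100`, `p(2,2;2) ≥ (1−δ) k 2 / 2` with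
`0 < δ ≤ 1/100`, and `k 2 / 8 ≤ p(2,2;1) ≤ k 2 / 3`, there is no 3-claw in colors `(2,3)`:
no vertices `x, y₁, y₂, y₃` with `c x yᵢ = 2` for all `i` and `c yᵢ yⱼ = 3` for `i ≠ j`. -/
theorem no_three_claw {V : Type*} [Fintype V] [DecidableEq V]
    (c : V → V → Fin 4)
    (hsymm : ∀ u v : V, c u v = c v u)
    (hdiag : ∀ v : V, c v v = 0)
    (hoff : ∀ u v : V, u ≠ v → c u v ≠ 0)
    (p : Fin 4 → Fin 4 → Fin 4 → ℕ)
    (hcoh : ∀ (i j t : Fin 4) (u v : V), c u v = t →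
      (Finset.univ.filter fun w => c u w = i ∧ c w v = j).card = p i j t)
    (k : Fin 4 → ℕ)
    (hk : ∀ (i : Fin 4) (v : V), (Finset.univ.filter fun w => c v w = i).card = k i)
    (hord : k 1 ≤ k 2 ∧ k 2 ≤ k 3)
    (hdiam : ∀ i : Fin 4, i ≠ 0 → ∀ u v : V, u ≠ v →
      c u v = i ∨ ∃ w, c u w = i ∧ c w v = i)
    (ε : ℝ) (hε0 : 0 < ε) (hε : ε ≤ 1 / 100)
    (hsmall : (k 2 : ℝ) ≤ ε * (k 3 : ℝ) / 2)
    (δ : ℝ) (hδ0 : 0 < δ) (hδ : δ ≤ 1 / 100)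
    (hp222 : (1 - δ) * (k 2 : ℝ) / 2 ≤ (p 2 2 2 : ℝ))
    (hp221lo : (k 2 : ℝ) / 8 ≤ (p 2 2 1 : ℝ))
    (hp221hi : (p 2 2 1 : ℝ) ≤ (k 2 : ℝ) / 3) :
    ¬ ∃ x y₁ y₂ y₃ : V,
        c x y₁ = 2 ∧ c x y₂ = 2 ∧ c x y₃ = 2 ∧
        c y₁ y₂ = 3 ∧ c y₁ y₃ = 3 ∧ c y₂ y₃ = 3 := by
  rintro ⟨x, y₁, y₂, y₃, h1, h2, h3, h12, h13, h23⟩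
  -- k 2 ≥ 1 since y₁ ∈ N₂(x)
  have hk2pos : 1 ≤ k 2 := by
    rw [← hk 2 x]
    exact Finset.card_pos.mpr ⟨y₁, by simp [h1]⟩
  have hk3pos : 1 ≤ k 3 := le_trans hk2pos hord.2
  -- Double counting: k 3 * p 2 2 3 ≤ k 2 * k 2
  have key : k 3 * p 2 2 3 ≤ k 2 * k 2 := by
    have h1' : k 3 * p 2 2 3 =
        ∑ w ∈ univ.filter (fun w => c x w = 3),
          (univ.filter fun u => c x u = 2 ∧ c u w = 2).card := by
      rw [Finset.sum_congr rfl (fun w hw => hcoh 2 2 3 x w (Finset.mem_filter.mp hw).2)]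
      rw [Finset.sum_const, hk 3 x, smul_eq_mul]
    have h2' : (∑ w ∈ univ.filter (fun w => c x w = 3),
          (univ.filter fun u => c x u = 2 ∧ c u w = 2).card)
        = ∑ u ∈ univ.filter (fun u => c x u = 2),
          ((univ.filter (fun w => c x w = 3)).filter fun w => c u w = 2).card := by
      simp only [Finset.card_filter]
      rw [Finset.sum_comm]
      rw [Finset.sum_filter]
      apply Finset.sum_congr rfl
      intro u _
      by_cases hu : c x u = 2 <;> simp [hu]
    have h3' : ∀ u : V, ((univ.filter (fun w => c x w = 3)).filter fun w => c u w = 2).card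
        ≤ k 2 := by
      intro u
      rw [← hk 2 u]
      apply Finset.card_le_card
      intro w hw
      simp only [Finset.mem_filter] at hw ⊢
      exact ⟨Finset.mem_univ w, hw.2⟩
    calc k 3 * p 2 2 3 = _ := h1'
      _ = _ := h2'
      _ ≤ ∑ _u ∈ univ.filter (fun u => c x u = 2), k 2 :=
          Finset.sum_le_sum fun u _ => h3' u
      _ = k 2 * k 2 := by rw [Finset.sum_const, hk 2 x, smul_eq_mul]
  -- The three sets
  set U₁ := univ.filter (fun w => c x w = 2 ∧ c w y₁ = 2) with hU₁
  set U₂ := univ.filter (fun w => c x w = 2 ∧ c w y₂ = 2) with hU₂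
  set U₃ := univ.filter (fun w => c x w = 2 ∧ c w y₃ = 2) with hU₃
  have hc1 : U₁.card = p 2 2 2 := hcoh 2 2 2 x y₁ h1
  have hc2 : U₂.card = p 2 2 2 := hcoh 2 2 2 x y₂ h2
  have hc3 : U₃.card = p 2 2 2 := hcoh 2 2 2 x y₃ h3
  -- pairwise intersections
  have hint : ∀ (a b : V), c a b = 3 →
      ((univ.filter (fun w => c x w = 2 ∧ c w a = 2)) ∩
       (univ.filter (fun w => c x w = 2 ∧ c w b = 2))).card ≤ p 2 2 3 := by
    intro a b hab
    rw [← hcoh 2 2 3 a b hab]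
    apply Finset.card_le_card
    intro w hw
    simp only [Finset.mem_inter, Finset.mem_filter] at hw ⊢
    exact ⟨Finset.mem_univ w, by rw [hsymm a w]; exact hw.1.2.2, hw.2.2.2⟩
  have hi12 : (U₁ ∩ U₂).card ≤ p 2 2 3 := hint y₁ y₂ h12
  have hi13 : (U₁ ∩ U₃).card ≤ p 2 2 3 := hint y₁ y₃ h13
  have hi23 : (U₂ ∩ U₃).card ≤ p 2 2 3 := hint y₂ y₃ h23
  -- union bounded by k 2
  have hun : (U₁ ∪ U₂ ∪ U₃).card ≤ k 2 := by
    rw [← hk 2 x]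
    apply Finset.card_le_card
    intro w hw
    simp only [Finset.mem_union, hU₁, hU₂, hU₃, Finset.mem_filter] at hw ⊢
    rcases hw with (h | h) | h <;> exact ⟨Finset.mem_univ w, h.2.1⟩
  -- inclusion-exclusion lower bound
  have ie1 : (U₁ ∪ U₂).card + (U₁ ∩ U₂).card = U₁.card + U₂.card :=
    Finset.card_union_add_card_inter U₁ U₂
  have ie2 : (U₁ ∪ U₂ ∪ U₃).card + ((U₁ ∪ U₂) ∩ U₃).card = (U₁ ∪ U₂).card + U₃.card :=
    Finset.card_union_add_card_inter (U₁ ∪ U₂) U₃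
  have ie3 : ((U₁ ∪ U₂) ∩ U₃).card ≤ (U₁ ∩ U₃).card + (U₂ ∩ U₃).card := by
    rw [Finset.union_inter_distrib_right]
    exact Finset.card_union_le _ _
  have main : 3 * p 2 2 2 ≤ k 2 + 3 * p 2 2 3 := by omega
  -- now real arithmetic
  have hk2R : (1 : ℝ) ≤ (k 2 : ℝ) := by exact_mod_cast hk2pos
  have hk3R : (1 : ℝ) ≤ (k 3 : ℝ) := by exact_mod_cast hk3pos
  have keyR : (k 3 : ℝ) * (p 2 2 3 : ℝ) ≤ (k 2 : ℝ) * (k 2 : ℝ) := by exact_mod_cast key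
  have hp223 : (p 2 2 3 : ℝ) ≤ ε * (k 2 : ℝ) / 2 := by
    nlinarith [keyR, mul_le_mul_of_nonneg_right hsmall (Nat.cast_nonneg (k 2) : (0:ℝ) ≤ (k 2 : ℝ)),
      hk3R, (Nat.cast_nonneg (p 2 2 3) : (0:ℝ) ≤ (p 2 2 3 : ℝ)), hε0.le, lt_of_lt_of_le one_pos hk3R]
  have mainR : 3 * (p 2 2 2 : ℝ) ≤ (k 2 : ℝ) + 3 * (p 2 2 3 : ℝ) := by exact_mod_cast main
  nlinarith [hp222, hp223, mainR, hk2R, hε0.le, hδ0.le]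
end
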